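/- arXiv:1002.0038 — 4 statements merged into one kernel-verified Lean document; each statement's English description precedes it below -/
import Mathlib

section
/- Let h : (0,∞)² → ℝ be piecewise generalized polynomial with pieces A_1, …, A_l (continuity of h is not assumed). Then the union of the interiors A_1°, …, A_l° (interiors taken in (0,∞)²) is dense in (0,∞)². -/
open Set

noncomputable section

/-- The open positive quadrant `(0,∞)²`, as a subtype of `ℝ × ℝ`. -/
abbrev PQ : Type := {p : ℝ × ℝ // 0 < p.1 ∧ 0 < p.2}

/-- A generalized polynomial function (signomial) of two variables: a finite sum
`∑ cᵢ x^{αᵢ₁} y^{αᵢ₂}` with nonzero real coefficients and distinct real exponent pairs. -/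
def IsGenPoly (a : PQ → ℝ) : Prop :=
  ∃ (m : ℕ) (c : Fin m → ℝ) (α : Fin m → ℝ × ℝ),
    (∀ i, c i ≠ 0) ∧ Function.Injective α ∧
    ∀ p : PQ, a p = ∑ i, c i * p.1.1 ^ (α i).1 * p.1.2 ^ (α i).2

/-- A basic generalized semialgebraic (semisignomial) subset of `(0,∞)²`. -/
def IsBasicGSA (S : Set PQ) : Prop :=
  ∃ (f : PQ → ℝ) (K : ℕ) (g : Fin K → PQ → ℝ),
    IsGenPoly f ∧ (∀ k, IsGenPoly (g k)) ∧
    S = {p : PQ | f p = 0 ∧ ∀ k, 0 < g k p}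

/-- A generalized semialgebraic set: a finite union of basic ones. -/
def IsGSA (S : Set PQ) : Prop :=
  ∃ (J : ℕ) (T : Fin J → Set PQ), (∀ j, IsBasicGSA (T j)) ∧ S = ⋃ j, T j

/-- `h` is piecewise generalized polynomial: there are finitely many *distinct*
generalized polynomial functions `g i` whose agreement sets with `h` are
generalized semialgebraic and cover `(0,∞)²`. -/
def IsPiecewiseGenPoly (h : PQ → ℝ) : Prop :=
  ∃ (l : ℕ) (g : Fin l → PQ → ℝ),
    (∀ i, IsGenPoly (g i)) ∧ Function.Injective g ∧
    (∀ i, IsGSA {p : PQ | h p = g i p}) ∧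
    ∀ p : PQ, ∃ i, h p = g i p

/-- `h` is a pointwise sup of infs of finitely many generalized polynomial functions. -/
def IsSupInf (h : PQ → ℝ) : Prop :=
  ∃ (J : ℕ) (K : Fin (J + 1) → ℕ)
    (f : (j : Fin (J + 1)) → Fin (K j + 1) → PQ → ℝ),
    (∀ j k, IsGenPoly (f j k)) ∧
    ∀ p : PQ, h p = ⨆ j, ⨅ k, f j k p

end

/-!
Each basic generalized semialgebraic set is locally closed (the zero set of a continuous
function cut with finitely many strict inequalities), so the pieces give a finite cover of
`(0,∞)²` by locally closed sets. By Baire's theorem the interiors of their closures are dense,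
and a locally closed set is open in its closure, so the interior of its closure lies in the
closure of its interior.
-/

theorem IsLocallyClosed.interior_closure_subset_closure_interior {X : Type*}
    [TopologicalSpace X] {s : Set X} (hs : IsLocallyClosed s) :
    interior (closure s) ⊆ closure (interior s) := by
  have hsub : interior (closure s) ∩ coborder s ⊆ interior s :=
    interior_maximal ((inter_subset_inter_left _ interior_subset).trans closure_inter_coborder.le)
      (isOpen_interior.inter hs.isOpen_coborder)
  exact (dense_coborder.open_subset_closure_inter isOpen_interior).trans (closure_mono hsub)

theorem dense_iUnion_interior_of_isLocallyClosed {X ι : Type*} [TopologicalSpace X]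
    [BaireSpace X] [Countable ι] {f : ι → Set X} (hf : ∀ i, IsLocallyClosed (f i))
    (hU : ⋃ i, f i = univ) : Dense (⋃ i, interior (f i)) := by
  have hclosures : Dense (⋃ i, interior (closure (f i))) :=
    dense_iUnion_interior_of_closed (fun _ => isClosed_closure)
      (univ_subset_iff.mp (hU ▸ iUnion_mono fun _ => subset_closure))
  refine dense_closure.mp (hclosures.mono (iUnion_subset fun i => ?_))
  exact (hf i).interior_closure_subset_closure_interior.trans
    (closure_mono (subset_iUnion (fun i => interior (f i)) i))

instance : LocallyCompactSpace PQ :=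
  ((isOpen_lt continuous_const continuous_fst).inter
    (isOpen_lt continuous_const continuous_snd)).locallyCompactSpace

theorem IsGenPoly.continuous {a : PQ → ℝ} (ha : IsGenPoly a) : Continuous a := by
  obtain ⟨m, c, α, -, -, hrep⟩ := ha
  rw [show a = _ from funext hrep]
  exact continuous_finsetSum _ fun i _ =>
    (continuous_const.mul ((continuous_fst.comp continuous_subtype_val).rpow_const
      fun p => Or.inl p.2.1.ne')).mul
      ((continuous_snd.comp continuous_subtype_val).rpow_const fun p => Or.inl p.2.2.ne')

theorem IsBasicGSA.isLocallyClosed {S : Set PQ} (hS : IsBasicGSA S) : IsLocallyClosed S := by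
  obtain ⟨f, K, g, hf, hg, rfl⟩ := hS
  refine ⟨⋂ k, {p | 0 < g k p}, {p | f p = 0},
    isOpen_iInter_of_finite fun k => isOpen_lt continuous_const (hg k).continuous,
    isClosed_eq hf.continuous continuous_const, ?_⟩
  ext p
  simp only [mem_ofPred_eq, mem_inter_iff, mem_iInter, and_comm]

theorem union_interiors_dense_general
    (l : ℕ)
    (A : Fin l → Set PQ)
    (hGSA : ∀ i, IsGSA (A i)) (hcover : ∀ p : PQ, ∃ i, p ∈ A i) :
    Dense (⋃ i, interior (A i)) := by
  choose J T hT hAT using hGSA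
  have hTA : ∀ i j, T i j ⊆ A i := fun i j => hAT i ▸ subset_iUnion (T i) j
  have hTcover : ⋃ q : Σ i, Fin (J i), T q.1 q.2 = univ := by
    refine eq_univ_of_forall fun p => ?_
    obtain ⟨i, hi⟩ := hcover p
    obtain ⟨j, hj⟩ := mem_iUnion.mp (hAT i ▸ hi)
    exact mem_iUnion.mpr ⟨⟨i, j⟩, hj⟩
  have hTclosed : ∀ q : Σ i, Fin (J i), IsLocallyClosed (T q.1 q.2) :=
    fun q => (hT q.1 q.2).isLocallyClosed
  refine (dense_iUnion_interior_of_isLocallyClosed hTclosed hTcover).mono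
    (iUnion_subset fun q => ?_)
  exact (interior_mono (hTA q.1 q.2)).trans (subset_iUnion (fun i => interior (A i)) q.1)

/-- For a piecewise generalized polynomial function (continuity not assumed),
the union of the interiors of the pieces is dense in `(0,∞)²`. -/
theorem union_interiors_dense (h : PQ → ℝ)
    (l : ℕ) (g : Fin l → PQ → ℝ)
    (hg : ∀ i, IsGenPoly (g i)) (hginj : Function.Injective g)
    (A : Fin l → Set PQ) (hA : ∀ i, A i = {p : PQ | h p = g i p})
    (hGSA : ∀ i, IsGSA (A i)) (hcover : ∀ p : PQ, ∃ i, p ∈ A i) :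
    Dense (⋃ i, interior (A i)) :=
  union_interiors_dense_general l A hGSA hcover
end

section
/- The set of functions (0,∞)² → ℝ expressible as a pointwise supremum of infima of finitely many generalized polynomial functions is closed under subtraction and multiplication, and hence forms a subring of the ring of all real-valued functions on (0,∞)². -/
/-!
The sup-inf functions are exactly the sublattice of `PQ → ℝ` generated by the ring `A` of
generalized polynomial functions (disjunctive normal form in a distributive lattice).
Translation by a fixed function is a lattice automorphism and negation a lattice
anti-automorphism, so the generated sublattice is closed under `+` and `-`. Multiplication by a
nonnegative function preserves `⊔` and `⊓`, so the sublattice generated by the nonnegative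
elements of `A` is closed under products. Every `a ∈ A` is dominated, `|a| ≤ q` for some `q ∈ A`
(take the absolute values of the coefficients), hence every sup-inf `h` is a difference
`(h + q) - q` of elements of that smaller sublattice, and `h₁ * h₂` expands into products of them.
-/

open Set

noncomputable section

open Finset

section LatticeClosure

variable {α β : Type*}

lemma mem_supClosure_iff_exists_fin [SemilatticeSup α] {s : Set α} {a : α} :
    a ∈ supClosure s ↔
      ∃ (n : ℕ) (g : Fin (n + 1) → α), (∀ i, g i ∈ s) ∧ univ.sup' univ_nonempty g = a := by
  constructor
  · classical
    rintro ⟨t, ht, hts, rfl⟩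
    obtain ⟨_ | n, g, hg⟩ := t.finite_toSet.fin_embedding
    · simp [← Finset.coe_nonempty, ← hg] at ht
    have ht_eq : t = Finset.univ.image g := by
      rw [← Finset.coe_inj, Finset.coe_image, Finset.coe_univ, Set.image_univ, hg]
    refine ⟨n, g, fun i => hts (hg ▸ mem_range_self i), ?_⟩
    subst ht_eq
    rw [Finset.sup'_image]
    rfl
  · rintro ⟨n, g, hg, rfl⟩
    exact finsetSup'_mem_supClosure _ fun i _ => hg i

lemma mem_infClosure_iff_exists_fin [SemilatticeInf α] {s : Set α} {a : α} :
    a ∈ infClosure s ↔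
      ∃ (n : ℕ) (g : Fin (n + 1) → α), (∀ i, g i ∈ s) ∧ univ.inf' univ_nonempty g = a :=
  mem_supClosure_iff_exists_fin (α := αᵒᵈ)

lemma mem_latticeClosure_iff_exists_fin [DistribLattice α] {s : Set α} {a : α} :
    a ∈ latticeClosure s ↔
      ∃ (n : ℕ) (m : Fin (n + 1) → ℕ) (g : (i : Fin (n + 1)) → Fin (m i + 1) → α),
        (∀ i j, g i j ∈ s) ∧
          univ.sup' univ_nonempty (fun i => univ.inf' univ_nonempty (g i)) = a := by
  simp only [← supClosure_infClosure, mem_supClosure_iff_exists_fin,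
    mem_infClosure_iff_exists_fin]
  constructor
  · rintro ⟨n, g, hg, rfl⟩
    choose m f hf hfg using hg
    exact ⟨n, m, f, hf, by simp only [hfg]⟩
  · rintro ⟨n, m, g, hg, rfl⟩
    exact ⟨n, _, fun i => ⟨m i, g i, hg i, rfl⟩, rfl⟩

lemma apply_mem_latticeClosure [Lattice α] [Lattice β] {s : Set α} {t : Set β} {f : α → β}
    (map_sup : ∀ a b, f (a ⊔ b) = f a ⊔ f b) (map_inf : ∀ a b, f (a ⊓ b) = f a ⊓ f b)
    (hf : ∀ a ∈ s, f a ∈ latticeClosure t) {a : α} (ha : a ∈ latticeClosure s) :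
    f a ∈ latticeClosure t := by
  have : f '' latticeClosure s ⊆ latticeClosure t := by
    rw [image_latticeClosure s f map_sup map_inf]
    exact latticeClosure_min (image_subset_iff.2 hf) isSublattice_latticeClosure
  exact this (mem_image_of_mem f ha)

lemma le_of_mem_latticeClosure [Lattice α] {s : Set α} {a c : α} (hs : ∀ b ∈ s, c ≤ b)
    (ha : a ∈ latticeClosure s) : c ≤ a :=
  latticeClosure_min (t := Ici c) hs
    ⟨fun _ hx _ _ => le_sup_of_le_left hx, fun _ hx _ hy => le_inf hx hy⟩ ha

end LatticeClosure

section OrderedAddGroup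

variable {α : Type*} [AddCommGroup α] [Lattice α] [IsOrderedAddMonoid α] {s : Set α} {a b : α}

lemma neg_mem_latticeClosure (hs : ∀ a ∈ s, -a ∈ s) (ha : a ∈ latticeClosure s) :
    -a ∈ latticeClosure s := by
  have : -a ∈ (-·) '' latticeClosure s := mem_image_of_mem _ ha
  rw [image_latticeClosure' s _ neg_sup neg_inf] at this
  exact latticeClosure_mono (image_subset_iff.2 hs) this

lemma add_mem_latticeClosure (hs : ∀ a ∈ s, ∀ b ∈ s, a + b ∈ s) (ha : a ∈ latticeClosure s)
    (hb : b ∈ latticeClosure s) : a + b ∈ latticeClosure s :=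
  apply_mem_latticeClosure (f := (· + b)) (fun x y => sup_add x y b) (fun x y => inf_add x y b)
    (fun a' ha' => apply_mem_latticeClosure (f := (a' + ·)) (fun x y => add_sup x y a')
      (fun x y => add_inf x y a') (fun b' hb' => subset_latticeClosure (hs a' ha' b' hb')) hb) ha

def AddSubgroup.latticeClosure (G : AddSubgroup α) : AddSubgroup α where
  carrier := _root_.latticeClosure G
  add_mem' := add_mem_latticeClosure fun _ ha _ hb => G.add_mem ha hb
  zero_mem' := subset_latticeClosure G.zero_mem
  neg_mem' := neg_mem_latticeClosure fun _ => G.neg_mem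

end OrderedAddGroup

section Functions

variable {X R : Type*} [CommRing R] [LinearOrder R] [IsOrderedRing R]

lemma mul_mem_latticeClosure_of_nonneg {s : Set (X → R)} (hs₀ : ∀ a ∈ s, 0 ≤ a)
    (hs : ∀ a ∈ s, ∀ b ∈ s, a * b ∈ s) {a b : X → R} (ha : a ∈ latticeClosure s)
    (hb : b ∈ latticeClosure s) : a * b ∈ latticeClosure s := by
  have hb₀ := le_of_mem_latticeClosure hs₀ hb
  refine apply_mem_latticeClosure (f := (· * b))
    (fun x y => funext fun p => max_mul_of_nonneg _ _ (hb₀ p))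
    (fun x y => funext fun p => min_mul_of_nonneg _ _ (hb₀ p)) (fun a' ha' => ?_) ha
  exact apply_mem_latticeClosure (f := (a' * ·))
    (fun x y => funext fun p => mul_max_of_nonneg _ _ (hs₀ a' ha' p))
    (fun x y => funext fun p => mul_min_of_nonneg _ _ (hs₀ a' ha' p))
    (fun b' hb' => subset_latticeClosure (hs a' ha' b' hb')) hb

variable {A : Subring (X → R)}

lemma exists_add_mem_latticeClosure_nonneg (hA : ∀ a ∈ A, ∃ q ∈ A, |a| ≤ q) {h : X → R}
    (hh : h ∈ latticeClosure A) :
    ∃ q ∈ A, 0 ≤ q ∧ h + q ∈ latticeClosure {a | a ∈ A ∧ 0 ≤ a} := by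
  set P : Set (X → R) := {a | a ∈ A ∧ 0 ≤ a}
  have hP : ∀ a ∈ P, ∀ b ∈ P, a + b ∈ P :=
    fun a ha b hb => ⟨A.add_mem ha.1 hb.1, add_nonneg ha.2 hb.2⟩
  have common_shift {a b : X → R} (ha : ∃ q ∈ A, 0 ≤ q ∧ a + q ∈ latticeClosure P)
      (hb : ∃ q ∈ A, 0 ≤ q ∧ b + q ∈ latticeClosure P) :
      ∃ q ∈ A, 0 ≤ q ∧ a + q ∈ latticeClosure P ∧ b + q ∈ latticeClosure P := by
    obtain ⟨q₁, hq₁, hq₁₀, ha⟩ := ha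
    obtain ⟨q₂, hq₂, hq₂₀, hb⟩ := hb
    refine ⟨q₁ + q₂, A.add_mem hq₁ hq₂, add_nonneg hq₁₀ hq₂₀, ?_, ?_⟩
    · rw [← add_assoc]
      exact add_mem_latticeClosure hP ha (subset_latticeClosure ⟨hq₂, hq₂₀⟩)
    · rw [add_comm q₁, ← add_assoc]
      exact add_mem_latticeClosure hP hb (subset_latticeClosure ⟨hq₁, hq₁₀⟩)
  induction hh using latticeClosure_sup_inf_induction with
  | mem a ha =>
    obtain ⟨q, hq, haq⟩ := hA a ha
    exact ⟨q, hq, (abs_nonneg a).trans haq, subset_latticeClosure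
      ⟨A.add_mem ha hq, neg_le_iff_add_nonneg'.1 ((neg_le_abs a).trans haq)⟩⟩
  | sup a _ b _ iha ihb =>
    obtain ⟨q, hq, hq₀, ha, hb⟩ := common_shift iha ihb
    exact ⟨q, hq, hq₀, (sup_add a b q).symm ▸ isSublattice_latticeClosure.supClosed ha hb⟩
  | inf a _ b _ iha ihb =>
    obtain ⟨q, hq, hq₀, ha, hb⟩ := common_shift iha ihb
    exact ⟨q, hq, hq₀, (inf_add a b q).symm ▸ isSublattice_latticeClosure.infClosed ha hb⟩

def Subring.latticeClosure (A : Subring (X → R)) (hA : ∀ a ∈ A, ∃ q ∈ A, |a| ≤ q) :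
    Subring (X → R) where
  __ := A.toAddSubgroup.latticeClosure
  one_mem' := subset_latticeClosure A.one_mem
  mul_mem' {h₁ h₂} hh₁ hh₂ := by
    let L := A.toAddSubgroup.latticeClosure
    let P : Set (X → R) := {a | a ∈ A ∧ 0 ≤ a}
    obtain ⟨q₁, hq₁, hq₁₀, hu₁⟩ := exists_add_mem_latticeClosure_nonneg hA hh₁
    obtain ⟨q₂, hq₂, hq₂₀, hu₂⟩ := exists_add_mem_latticeClosure_nonneg hA hh₂
    have hmul {u v : X → R} (hu : u ∈ _root_.latticeClosure P)
        (hv : v ∈ _root_.latticeClosure P) : u * v ∈ L :=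
      latticeClosure_mono (fun _ ha => ha.1) <| mul_mem_latticeClosure_of_nonneg (s := P)
        (fun _ ha => ha.2) (fun _ ha _ hb => ⟨A.mul_mem ha.1 hb.1, mul_nonneg ha.2 hb.2⟩) hu hv
    have hq₁' : q₁ ∈ _root_.latticeClosure P := subset_latticeClosure ⟨hq₁, hq₁₀⟩
    have hq₂' : q₂ ∈ _root_.latticeClosure P := subset_latticeClosure ⟨hq₂, hq₂₀⟩
    have : h₁ * h₂ = (h₁ + q₁) * (h₂ + q₂) - q₁ * (h₂ + q₂) - (h₁ + q₁) * q₂ + q₁ * q₂ := by ring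
    rw [this]
    exact L.add_mem (L.sub_mem (L.sub_mem (hmul hu₁ hu₂) (hmul hq₁' hu₂)) (hmul hu₁ hq₂'))
      (hmul hq₁' hq₂')

end Functions

def quadrantMonomial : Multiplicative (ℝ × ℝ) →* (PQ → ℝ) where
  toFun γ p := p.1.1 ^ γ.toAdd.1 * p.1.2 ^ γ.toAdd.2
  map_one' := by
    funext p
    simp
  map_mul' γ δ := by
    funext p
    simp only [toAdd_mul, Prod.fst_add, Prod.snd_add, Pi.mul_apply,
      Real.rpow_add p.2.1, Real.rpow_add p.2.2]
    ring

def signomialEval : AddMonoidAlgebra ℝ (ℝ × ℝ) →ₐ[ℝ] (PQ → ℝ) :=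
  AddMonoidAlgebra.lift ℝ (PQ → ℝ) (ℝ × ℝ) quadrantMonomial

lemma signomialEval_single (γ : ℝ × ℝ) (c : ℝ) (p : PQ) :
    signomialEval (AddMonoidAlgebra.single γ c) p = c * p.1.1 ^ γ.1 * p.1.2 ^ γ.2 := by
  simp only [signomialEval, AddMonoidAlgebra.lift_single, Pi.smul_apply, smul_eq_mul]
  exact (mul_assoc _ _ _).symm

lemma signomialEval_apply (F : AddMonoidAlgebra ℝ (ℝ × ℝ)) (p : PQ) :
    signomialEval F p = ∑ γ ∈ F.coeff.support, F.coeff γ * p.1.1 ^ γ.1 * p.1.2 ^ γ.2 := by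
  conv_lhs => rw [← AddMonoidAlgebra.sum_coeff_single F]
  simp only [Finsupp.sum, map_sum, Finset.sum_apply, signomialEval_single]

lemma isGenPoly_iff_exists_signomialEval {a : PQ → ℝ} :
    IsGenPoly a ↔ ∃ F, signomialEval F = a := by
  constructor
  · rintro ⟨m, c, α, -, -, ha⟩
    refine ⟨∑ i, AddMonoidAlgebra.single (α i) (c i), funext fun p => ?_⟩
    simp only [map_sum, Finset.sum_apply, signomialEval_single, ha]
  · rintro ⟨F, rfl⟩
    let e := F.coeff.support.equivFin.symm
    refine ⟨F.coeff.support.card, fun i => F.coeff (e i), fun i => e i,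
      fun i => Finsupp.mem_support_iff.1 (e i).2, fun i j hij => e.injective (Subtype.ext hij),
      fun p => ?_⟩
    rw [signomialEval_apply, ← Finset.sum_coe_sort]
    exact (e.sum_comp fun γ => F.coeff γ * p.1.1 ^ γ.1.1 * p.1.2 ^ γ.1.2).symm

def genPolySubring : Subring (PQ → ℝ) :=
  signomialEval.range.toSubring

lemma coe_genPolySubring : (genPolySubring : Set (PQ → ℝ)) = {a | IsGenPoly a} :=
  Set.ext fun _ => isGenPoly_iff_exists_signomialEval.symm

lemma IsGenPoly.exists_abs_le {a : PQ → ℝ} (ha : IsGenPoly a) :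
    ∃ q, IsGenPoly q ∧ |a| ≤ q := by
  obtain ⟨m, c, α, hc, hα, ha⟩ := ha
  refine ⟨fun p => ∑ i, |c i| * p.1.1 ^ (α i).1 * p.1.2 ^ (α i).2,
    ⟨m, fun i => |c i|, α, fun i => abs_ne_zero.2 (hc i), hα, fun p => rfl⟩, fun p => ?_⟩
  rw [Pi.abs_apply, ha p]
  refine (Finset.abs_sum_le_sum_abs _ _).trans (le_of_eq (Finset.sum_congr rfl fun i _ => ?_))
  rw [abs_mul, abs_mul, abs_of_pos (Real.rpow_pos_of_pos p.2.1 _),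
    abs_of_pos (Real.rpow_pos_of_pos p.2.2 _)]

lemma exists_abs_le_of_mem_genPolySubring :
    ∀ a ∈ genPolySubring, ∃ q ∈ genPolySubring, |a| ≤ q := by
  simp only [← SetLike.mem_coe, coe_genPolySubring]
  exact fun a ha => ha.exists_abs_le

lemma isSupInf_iff_mem_latticeClosure {h : PQ → ℝ} :
    IsSupInf h ↔ h ∈ latticeClosure {a | IsGenPoly a} := by
  rw [mem_latticeClosure_iff_exists_fin]
  refine exists_congr fun J => exists_congr fun K => exists_congr fun f =>
    and_congr_right fun _ => ?_
  rw [eq_comm, funext_iff]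
  simp only [Finset.sup'_apply, Finset.inf'_apply]
  simp only [Finset.sup'_univ_eq_ciSup, Finset.inf'_univ_eq_ciInf]

def supInfSubring : Subring (PQ → ℝ) :=
  genPolySubring.latticeClosure exists_abs_le_of_mem_genPolySubring

lemma mem_supInfSubring {h : PQ → ℝ} : h ∈ supInfSubring ↔ IsSupInf h := by
  rw [isSupInf_iff_mem_latticeClosure, ← coe_genPolySubring]
  rfl

/-- The set of sups of infs of finitely many generalized polynomial functions is
closed under subtraction and multiplication, and forms a subring of the ring of
all real-valued functions on `(0,∞)²`. -/
theorem supInf_closed_under_sub_mul :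
    (∀ h₁ h₂ : PQ → ℝ, IsSupInf h₁ → IsSupInf h₂ →
      IsSupInf (h₁ - h₂) ∧ IsSupInf (h₁ * h₂)) ∧
    ∃ S : Subring (PQ → ℝ), (S : Set (PQ → ℝ)) = {h : PQ → ℝ | IsSupInf h} := by
  refine ⟨fun h₁ h₂ h1 h2 => ?_, supInfSubring, Set.ext fun _ => mem_supInfSubring⟩
  rw [← mem_supInfSubring] at h1 h2
  exact ⟨mem_supInfSubring.1 (supInfSubring.sub_mem h1 h2),
    mem_supInfSubring.1 (supInfSubring.mul_mem h1 h2)⟩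
end
end

section
/- Let B be a finite set of nonzero generalized polynomial functions on (0,∞)² that is closed under the two operations: (i) a ↦ ∂a/∂y if the least y-exponent β_1 of a is 0, and a ↦ y^{−β_1}·a if β_1 ≠ 0 (applied when a has K > 1 y-terms); and (ii) a ↦ r_a := a − (y/β_K)·∂a/∂y if β_1 = 0 (where β_K is the greatest y-exponent of a), and a ↦ a if β_1 ≠ 0 (applied when K > 1). Let 0 = γ_0 < γ_1 < … < γ_L < γ_{L+1} = ∞ be such that the conclusions of the projection lemma hold for B: for each a ∈ B and each p ∈ {0,…,L}, the zero set of a in H_p := (γ_p,γ_{p+1}) × (0,∞) is the union of graphs of continuous functions ξ_{a,p,1} < … < ξ_{a,p,s(a,p)} : (γ_p,γ_{p+1}) → (0,∞), with the uniform trichotomy: for all a_1, a_2 ∈ B and all valid indices, exactly one of ξ_{a_1,p,j_1} < ξ_{a_2,p,j_2}, =, > holds throughout (γ_p,γ_{p+1}). Then for each p ∈ {0,…,L}, each a ∈ B, and each j ∈ {0,1,…,s(a,p)} (with the convention ξ_{a,p,0} ≡ 0), there exists a function c_{a,p,j} : (0,∞)² → ℝ which is a sup of infs of finitely many generalized polynomial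 functions and satisfies, for all x ∈ (γ_p,γ_{p+1}) and all y ∈ (0,∞): c_{a,p,j}(x,y) = a(x,y) if y > ξ_{a,p,j}(x), and c_{a,p,j}(x,y) = 0 otherwise. -/
open Set

noncomputable section

/-- A one-variable generalized polynomial function (on `(0,∞)`):
`x ↦ ∑ cᵢ x^{αᵢ}` with nonzero real coefficients and distinct real exponents. -/
def IsGenPoly1 (f : ℝ → ℝ) : Prop :=
  ∃ (m : ℕ) (c : Fin m → ℝ) (α : Fin m → ℝ),
    (∀ i, c i ≠ 0) ∧ Function.Injective α ∧
    ∀ x : ℝ, 0 < x → f x = ∑ i, c i * x ^ α i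

/-- A generalized polynomial function of two variables (values prescribed on the
open positive quadrant): `(x,y) ↦ ∑ cᵢ x^{αᵢ₁} y^{αᵢ₂}` with nonzero real
coefficients and distinct real exponent pairs. -/
def IsGenPoly2 (a : ℝ → ℝ → ℝ) : Prop :=
  ∃ (m : ℕ) (c : Fin m → ℝ) (α : Fin m → ℝ × ℝ),
    (∀ i, c i ≠ 0) ∧ Function.Injective α ∧
    ∀ x y : ℝ, 0 < x → 0 < y → a x y = ∑ i, c i * x ^ (α i).1 * y ^ (α i).2

/-- A basic generalized semialgebraic (semisignomial) subset of `(0,∞)²`. -/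
def IsBasicGSA2 (S : Set (ℝ × ℝ)) : Prop :=
  ∃ (f : ℝ → ℝ → ℝ) (K : ℕ) (g : Fin K → ℝ → ℝ → ℝ),
    IsGenPoly2 f ∧ (∀ k, IsGenPoly2 (g k)) ∧
    S = {q : ℝ × ℝ | 0 < q.1 ∧ 0 < q.2 ∧ f q.1 q.2 = 0 ∧ ∀ k, 0 < g k q.1 q.2}

/-- A generalized semialgebraic subset of `(0,∞)²`: a finite union of basic ones. -/
def IsGSA2 (S : Set (ℝ × ℝ)) : Prop :=
  ∃ (J : ℕ) (T : Fin J → Set (ℝ × ℝ)), (∀ j, IsBasicGSA2 (T j)) ∧ S = ⋃ j, T j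

/-- The `p`-th interval of the subdivision `0 = γ 0 < γ 1 < … < γ L < γ (L+1) = ∞`
of `(0,∞)`: it is `(γ p, γ (p+1))` for `p < L` and `(γ L, ∞)` for `p = L`. -/
def vstrip (γ : ℕ → ℝ) (L p : ℕ) : Set ℝ :=
  if p = L then Set.Ioi (γ p) else Set.Ioo (γ p) (γ (p + 1))

/-- `h` is a pointwise sup of infs of finitely many generalized polynomial
functions (on the open positive quadrant). -/
def IsSupInf2 (h : ℝ → ℝ → ℝ) : Prop :=
  ∃ (J : ℕ) (K : Fin (J + 1) → ℕ)
    (f : (j : Fin (J + 1)) → Fin (K j + 1) → ℝ → ℝ → ℝ),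
    (∀ j k, IsGenPoly2 (f j k)) ∧
    ∀ x y : ℝ, 0 < x → 0 < y → h x y = ⨆ j, ⨅ k, f j k x y

/-!
Induction on the number of `y`-terms of `a`. If the least `y`-exponent of `a` is `0`, then
`a = r_a + (y / β_K) ∂a/∂y` where `∂a/∂y` and `r_a` have fewer terms. Truncating them at their
last roots weakly below a root `ξ_j` of `a` gives `c₀ = R + (y / β_K) A`, which equals `a` above
`ξ_j`. On the root band of `∂a/∂y` through `ξ_j` the function `a` is strictly monotone in `y`, and
below `ξ_j` the remainder `r_a` inherits the sign of `a`; so `c₀` has one sign below `ξ_j`, and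
`a` has the opposite sign just above it. Taking `min`/`max` of `c₀` with `0` and the truncation
at `ξ_{j+1}` (downward induction on `j`) kills `c₀` below `ξ_j`. If the least exponent `β₁` is
not `0`, one works with `y ^ (-β₁) a`, which has the same roots. Uniqueness of `y`-expansions,
i.e. the linear independence of the characters `y ↦ y ^ t`, makes the number of terms drop.
-/

open Topology Function

theorem IsGenPoly2.of_finsupp {f : ℝ → ℝ → ℝ} (F : ℝ × ℝ →₀ ℝ)
    (h : ∀ x y : ℝ, 0 < x → 0 < y → f x y = F.sum fun p c => c * x ^ p.1 * y ^ p.2) :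
    IsGenPoly2 f := by
  let e := F.support.equivFin.symm
  refine ⟨F.support.card, fun i => F (e i), fun i => e i, fun i => ?_,
    Subtype.val_injective.comp e.injective, fun x y hx hy => ?_⟩
  · exact Finsupp.mem_support_iff.mp (e i).2
  · rw [h x y hx hy, Finsupp.sum, ← Finset.sum_coe_sort]
    exact (e.sum_comp fun p : F.support => F p * x ^ (p : ℝ × ℝ).1 * y ^ (p : ℝ × ℝ).2).symm

theorem IsGenPoly2.of_sum {f : ℝ → ℝ → ℝ} {ι : Type*} [Fintype ι] (c : ι → ℝ)
    (α : ι → ℝ × ℝ)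
    (h : ∀ x y : ℝ, 0 < x → 0 < y → f x y = ∑ i, c i * x ^ (α i).1 * y ^ (α i).2) :
    IsGenPoly2 f := by
  refine .of_finsupp (∑ i, Finsupp.single (α i) (c i)) fun x y hx hy => ?_
  rw [h x y hx hy, ← Finsupp.sum_finsetSum_index (fun _ => by simp) (fun _ _ _ => by ring)]
  simp [Finsupp.sum_single_index]

theorem isGenPoly2_zero : IsGenPoly2 fun _ _ => 0 :=
  .of_sum (ι := Empty) (fun _ => 0) (fun _ => 0) (by simp)

theorem IsGenPoly2.add {f g : ℝ → ℝ → ℝ} (hf : IsGenPoly2 f) (hg : IsGenPoly2 g) :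
    IsGenPoly2 fun x y => f x y + g x y := by
  obtain ⟨m, c, α, -, -, hf⟩ := hf
  obtain ⟨m', c', α', -, -, hg⟩ := hg
  refine .of_sum (Sum.elim c c') (Sum.elim α α') fun x y hx hy => ?_
  simp [Fintype.sum_sum_type, hf x y hx hy, hg x y hx hy]

theorem IsGenPoly2.const_mul_rpow {f : ℝ → ℝ → ℝ} (hf : IsGenPoly2 f) (C e : ℝ) :
    IsGenPoly2 fun x y => C * y ^ e * f x y := by
  obtain ⟨m, c, α, -, -, hf⟩ := hf
  refine .of_sum (fun i => C * c i) (fun i => ((α i).1, (α i).2 + e)) fun x y hx hy => ?_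
  simp only [hf x y hx hy, Finset.mul_sum, Real.rpow_add hy]
  exact Finset.sum_congr rfl fun _ _ => by ring

theorem IsGenPoly2.continuousOn {f : ℝ → ℝ → ℝ} (hf : IsGenPoly2 f) :
    ContinuousOn (uncurry f) (Ioi 0 ×ˢ Ioi 0) := by
  obtain ⟨m, c, α, -, -, hf⟩ := hf
  refine ContinuousOn.congr (f := fun q : ℝ × ℝ => ∑ i, c i * q.1 ^ (α i).1 * q.2 ^ (α i).2)
    ?_ fun q hq => hf q.1 q.2 hq.1 hq.2
  refine continuousOn_finsetSum _ fun i _ => ?_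
  refine (continuousOn_const.mul (continuousOn_fst.rpow_const fun q hq => ?_)).mul
    (continuousOn_snd.rpow_const fun q hq => ?_)
  · exact Or.inl (ne_of_gt hq.1)
  · exact Or.inl (ne_of_gt hq.2)

theorem isGenPoly2_of_sum_mul_rpow {f : ℝ → ℝ → ℝ} {ι : Type*} [Fintype ι] {b : ι → ℝ → ℝ}
    {e : ι → ℝ} (hb : ∀ i, IsGenPoly1 (b i))
    (h : ∀ x y : ℝ, 0 < x → 0 < y → f x y = ∑ i, b i x * y ^ e i) : IsGenPoly2 f := by
  choose m c α _ _ hc using hb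
  refine .of_sum (ι := Σ i, Fin (m i)) (fun p => c p.1 p.2) (fun p => (α p.1 p.2, e p.1))
    fun x y hx hy => ?_
  rw [h x y hx hy, Fintype.sum_sigma]
  exact Finset.sum_congr rfl fun i _ => by rw [hc i x hx, Finset.sum_mul]

section FiniteSupInf

variable {α ι κ : Type*} [ConditionallyCompleteLinearOrder α] [Finite ι] [Nonempty ι]
  [Finite κ] [Nonempty κ]

theorem Finite.ciSup_sum_elim (f : ι → α) (g : κ → α) :
    ⨆ s, Sum.elim f g s = max (⨆ i, f i) (⨆ k, g k) :=
  le_antisymm (ciSup_le fun s => s.rec (fun i => le_max_of_le_left (Finite.le_ciSup f i))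
      fun k => le_max_of_le_right (Finite.le_ciSup g k))
    (max_le (ciSup_le fun i => Finite.le_ciSup (Sum.elim f g) (.inl i))
      (ciSup_le fun k => Finite.le_ciSup (Sum.elim f g) (.inr k)))

theorem Finite.ciInf_sum_elim (f : ι → α) (g : κ → α) :
    ⨅ s, Sum.elim f g s = min (⨅ i, f i) (⨅ k, g k) :=
  Finite.ciSup_sum_elim (α := αᵒᵈ) f g

theorem Finite.map₂_ciSup (op : α → α → α) (hl : ∀ b, Monotone (op · b))
    (hr : ∀ a, Monotone (op a)) (f : ι → α) (g : κ → α) :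
    op (⨆ i, f i) (⨆ k, g k) = ⨆ p : ι × κ, op (f p.1) (g p.2) := by
  rw [Finite.ciSup_prod, Finite.map_iSup_of_monotoneOn ((hl _).monotoneOn univ) fun _ => mem_univ _]
  exact iSup_congr fun i =>
    Finite.map_iSup_of_monotoneOn ((hr _).monotoneOn univ) fun _ => mem_univ _

theorem Finite.map₂_ciInf (op : α → α → α) (hl : ∀ b, Monotone (op · b))
    (hr : ∀ a, Monotone (op a)) (f : ι → α) (g : κ → α) :
    op (⨅ i, f i) (⨅ k, g k) = ⨅ p : ι × κ, op (f p.1) (g p.2) :=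
  Finite.map₂_ciSup (α := αᵒᵈ) op (fun b => (hl b).dual) (fun a => (hr a).dual) f g

end FiniteSupInf

theorem Finite.exists_equiv_fin_succ (ι : Type*) [Finite ι] [Nonempty ι] :
    ∃ J, Nonempty (ι ≃ Fin (J + 1)) := by
  obtain ⟨n, ⟨e⟩⟩ := Finite.exists_equiv_fin ι
  cases n with
  | zero => exact (IsEmpty.false (e (Classical.arbitrary ι))).elim
  | succ J => exact ⟨J, ⟨e⟩⟩

theorem isSupInf2_iff_exists_finite {h : ℝ → ℝ → ℝ} :
    IsSupInf2 h ↔ ∃ (ι κ : Type) (_ : Finite ι) (_ : Nonempty ι) (_ : Finite κ) (_ : Nonempty κ)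
      (f : ι → κ → ℝ → ℝ → ℝ), (∀ i k, IsGenPoly2 (f i k)) ∧
        ∀ x y : ℝ, 0 < x → 0 < y → h x y = ⨆ i, ⨅ k, f i k x y := by
  constructor
  · rintro ⟨J, K, f, hf, hh⟩
    -- the inner index ranges over choice functions, which pads every row to the same type
    refine ⟨Fin (J + 1), (j : Fin (J + 1)) → Fin (K j + 1), inferInstance, inferInstance,
      inferInstance, inferInstance, fun j σ => f j (σ j), fun j σ => hf j (σ j),
      fun x y hx hy => (hh x y hx hy).trans (iSup_congr fun j => le_antisymm ?_ ?_)⟩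
    · exact le_ciInf fun σ => Finite.ciInf_le (fun k => f j k x y) (σ j)
    · refine le_ciInf fun k => Finite.ciInf_le_of_le (Function.update (fun _ => 0) j k) ?_
      dsimp only
      rw [Function.update_self]
  · rintro ⟨ι, κ, _, _, _, _, f, hf, hh⟩
    obtain ⟨J, ⟨e⟩⟩ := Finite.exists_equiv_fin_succ ι
    obtain ⟨K, ⟨e'⟩⟩ := Finite.exists_equiv_fin_succ κ
    refine ⟨J, fun _ => K, fun j k => f (e.symm j) (e'.symm k), fun j k => hf _ _,
      fun x y hx hy => ?_⟩
    rw [hh x y hx hy, ← e.symm.iSup_comp]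
    exact iSup_congr fun i => (e'.symm.iInf_comp (g := fun k => f _ k x y)).symm

theorem IsGenPoly2.isSupInf2 {f : ℝ → ℝ → ℝ} (hf : IsGenPoly2 f) : IsSupInf2 f :=
  ⟨0, fun _ => 0, fun _ _ => f, fun _ _ => hf, fun x y _ _ => by simp⟩

theorem IsSupInf2.max {f g : ℝ → ℝ → ℝ} (hf : IsSupInf2 f) (hg : IsSupInf2 g) :
    IsSupInf2 fun x y => max (f x y) (g x y) := by
  rw [isSupInf2_iff_exists_finite] at *
  obtain ⟨ι, κ, _, _, _, _, F, hF, hf⟩ := hf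
  obtain ⟨ι', κ', _, _, _, _, G, hG, hg⟩ := hg
  refine ⟨ι ⊕ ι', κ × κ', inferInstance, inferInstance, inferInstance, inferInstance,
    Sum.elim (fun i k => F i k.1) (fun i k => G i k.2), fun s k => ?_, fun x y hx hy => ?_⟩
  · cases s <;> simp [hF, hG]
  · rw [hf x y hx hy, hg x y hx hy, ← Finite.ciSup_sum_elim]
    refine iSup_congr fun s => ?_
    cases s <;> simp [Finite.ciInf_prod, ciInf_const]

theorem IsSupInf2.min {f g : ℝ → ℝ → ℝ} (hf : IsSupInf2 f) (hg : IsSupInf2 g) :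
    IsSupInf2 fun x y => min (f x y) (g x y) := by
  rw [isSupInf2_iff_exists_finite] at *
  obtain ⟨ι, κ, _, _, _, _, F, hF, hf⟩ := hf
  obtain ⟨ι', κ', _, _, _, _, G, hG, hg⟩ := hg
  refine ⟨ι × ι', κ ⊕ κ', inferInstance, inferInstance, inferInstance, inferInstance,
    fun i => Sum.elim (F i.1) (G i.2), fun i k => ?_, fun x y hx hy => ?_⟩
  · cases k <;> simp [hF, hG]
  · rw [hf x y hx hy, hg x y hx hy,
      Finite.map₂_ciSup (Min.min : ℝ → ℝ → ℝ) (fun _ _ _ h => by dsimp only; gcongr)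
        (fun _ _ _ h => by gcongr)]
    refine iSup_congr fun i => ?_
    rw [← Finite.ciInf_sum_elim]
    exact iInf_congr fun k => by cases k <;> rfl

theorem IsSupInf2.add {f g : ℝ → ℝ → ℝ} (hf : IsSupInf2 f) (hg : IsSupInf2 g) :
    IsSupInf2 fun x y => f x y + g x y := by
  rw [isSupInf2_iff_exists_finite] at *
  obtain ⟨ι, κ, _, _, _, _, F, hF, hf⟩ := hf
  obtain ⟨ι', κ', _, _, _, _, G, hG, hg⟩ := hg
  refine ⟨ι × ι', κ × κ', inferInstance, inferInstance, inferInstance, inferInstance,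
    fun i k x y => F i.1 k.1 x y + G i.2 k.2 x y, fun i k => (hF _ _).add (hG _ _),
    fun x y hx hy => ?_⟩
  rw [hf x y hx hy, hg x y hx hy, Finite.map₂_ciSup ((· + ·) : ℝ → ℝ → ℝ)
    (fun _ _ _ h => by dsimp only; gcongr) (fun _ _ _ h => by dsimp only; gcongr)]
  exact iSup_congr fun i => Finite.map₂_ciInf ((· + ·) : ℝ → ℝ → ℝ)
    (fun _ _ _ h => by dsimp only; gcongr) (fun _ _ _ h => by dsimp only; gcongr) _ _

theorem IsSupInf2.const_mul_rpow {f : ℝ → ℝ → ℝ} (hf : IsSupInf2 f) {C : ℝ} (hC : 0 ≤ C)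
    (e : ℝ) : IsSupInf2 fun x y => C * y ^ e * f x y := by
  rw [isSupInf2_iff_exists_finite] at *
  obtain ⟨ι, κ, _, _, _, _, F, hF, hf⟩ := hf
  refine ⟨ι, κ, inferInstance, inferInstance, inferInstance, inferInstance,
    fun i k x y => C * y ^ e * F i k x y, fun i k => (hF i k).const_mul_rpow C e,
    fun x y hx hy => ?_⟩
  have hmono : Monotone (C * y ^ e * ·) :=
    monotone_mul_left_of_nonneg (mul_nonneg hC (Real.rpow_nonneg hy.le e))
  rw [hf x y hx hy, Finite.map_iSup_of_monotoneOn (hmono.monotoneOn univ) fun _ => mem_univ _]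
  exact iSup_congr fun i =>
    Finite.map_iInf_of_monotoneOn (hmono.monotoneOn univ) fun _ => mem_univ _

def rpowChar (t : ℝ) : {y : ℝ // 0 < y} →* ℝ where
  toFun y := (y : ℝ) ^ t
  map_one' := Real.one_rpow t
  map_mul' y z := Real.mul_rpow y.2.le z.2.le

theorem linearIndependent_rpow :
    LinearIndependent ℝ fun (t : ℝ) (y : {y : ℝ // 0 < y}) => (y : ℝ) ^ t := by
  refine (linearIndependent_monoidHom _ ℝ).comp rpowChar fun t t' h => ?_
  have := DFunLike.congr_fun h ⟨Real.exp 1, Real.exp_pos 1⟩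
  simpa [rpowChar, Real.exp_one_rpow] using this

theorem exists_exponent_eq_of_sum_rpow_eq {ι κ : Type*} [Fintype ι] [Fintype κ] {b : ι → ℝ}
    {e : ι → ℝ} {c : κ → ℝ} {g : κ → ℝ} (he : Injective e)
    (h : ∀ y : ℝ, 0 < y → ∑ i, b i * y ^ e i = ∑ k, c k * y ^ g k) {i : ι} (hi : b i ≠ 0) :
    ∃ k, g k = e i ∧ c k ≠ 0 := by
  classical
  have hcoeff : ∑ i, Finsupp.single (e i) (b i) = ∑ k, Finsupp.single (g k) (c k) :=
    linearIndependent_rpow <| by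
      ext y
      simpa [map_sum, Finsupp.linearCombination_single] using h y y.2
  have := DFunLike.congr_fun hcoeff (e i)
  simp only [Finsupp.finsetSum_apply, Finsupp.single_apply, he.eq_iff] at this
  rw [Finset.sum_ite_eq' Finset.univ i b, if_pos (Finset.mem_univ _)] at this
  obtain ⟨k, -, hk⟩ := Finset.exists_ne_zero_of_sum_ne_zero (this ▸ hi)
  by_cases hgk : g k = e i
  · exact ⟨k, hgk, by simpa [hgk] using hk⟩
  · simp [hgk] at hk

theorem exists_injective_of_sum_rpow_eq {ι κ : Type*} [Fintype ι] [Fintype κ]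
    {b : ι → ℝ → ℝ} {e : ι → ℝ} {c : κ → ℝ → ℝ} {g : κ → ℝ} (he : Injective e)
    (hb : ∀ i, ∃ x, 0 < x ∧ b i x ≠ 0)
    (h : ∀ x y : ℝ, 0 < x → 0 < y → ∑ i, b i x * y ^ e i = ∑ k, c k x * y ^ g k) :
    ∃ φ : ι → κ, Injective φ ∧ ∀ i, g (φ i) = e i ∧ ∃ x, 0 < x ∧ c (φ i) x ≠ 0 := by
  have : ∀ i, ∃ k, g k = e i ∧ ∃ x, 0 < x ∧ c k x ≠ 0 := fun i => by
    obtain ⟨x, hx, hbx⟩ := hb i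
    obtain ⟨k, hk, hck⟩ := exists_exponent_eq_of_sum_rpow_eq he (h x · hx) hbx
    exact ⟨k, hk, x, hx, hck⟩
  choose φ hφ using this
  exact ⟨φ, fun i i' hii => he (by rw [← (hφ i).1, ← (hφ i').1, hii]), hφ⟩

theorem card_lt_of_sum_rpow_eq {K K' : ℕ} {b : Fin K → ℝ → ℝ} {e : Fin K → ℝ}
    (he : Injective e) (hb : ∀ i, ∃ x, 0 < x ∧ b i x ≠ 0) {c : Fin K' → ℝ → ℝ} {g : Fin K' → ℝ}
    (h : ∀ x y : ℝ, 0 < x → 0 < y → ∑ i, b i x * y ^ e i = ∑ k, c k x * y ^ g k) {k₀ : Fin K'}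
    (hk₀ : ∀ x, c k₀ x = 0) : K < K' := by
  obtain ⟨φ, hφ, hφc⟩ := exists_injective_of_sum_rpow_eq he hb h
  have := Fintype.card_lt_of_injective_not_surjective φ hφ fun hsurj => by
    obtain ⟨i, rfl⟩ := hsurj k₀
    obtain ⟨x, -, hx⟩ := (hφc i).2
    exact hx (hk₀ x)
  simpa using this

theorem IsPreconnected.pos_of_pos {X : Type*} [TopologicalSpace X] {S : Set X} {F : X → ℝ}
    (hS : IsPreconnected S) (hF : ContinuousOn F S) (hne : ∀ z ∈ S, F z ≠ 0) {z₀ z : X}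
    (hz₀ : z₀ ∈ S) (hz : z ∈ S) (h : 0 < F z₀) : 0 < F z := by
  by_contra! hle
  obtain ⟨w, hw, hw0⟩ := hS.intermediate_value₂ hz hz₀ hF continuousOn_const hle h.le
  exact hne w hw hw0

def IsUniformlyOrdered (V : Set ℝ) (u v : ℝ → ℝ) : Prop :=
  (∀ x ∈ V, u x < v x) ∨ (∀ x ∈ V, u x = v x) ∨ (∀ x ∈ V, v x < u x)

namespace IsUniformlyOrdered

variable {V : Set ℝ} {u v : ℝ → ℝ} {x₀ : ℝ}

theorem symm (h : IsUniformlyOrdered V u v) : IsUniformlyOrdered V v u := by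
  rcases h with h | h | h
  exacts [.inr (.inr h), .inr (.inl fun x hx => (h x hx).symm), .inl h]

theorem lt_of_lt (h : IsUniformlyOrdered V u v) (hx₀ : x₀ ∈ V) (h₀ : u x₀ < v x₀) :
    ∀ x ∈ V, u x < v x := by
  rcases h with h | h | h
  · exact h
  · exact absurd (h x₀ hx₀) h₀.ne
  · exact absurd (h x₀ hx₀) h₀.not_gt

theorem eq_of_eq (h : IsUniformlyOrdered V u v) (hx₀ : x₀ ∈ V) (h₀ : u x₀ = v x₀) :
    ∀ x ∈ V, u x = v x := by
  rcases h with h | h | h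
  · exact absurd h₀ (h x₀ hx₀).ne
  · exact h
  · exact absurd h₀ (h x₀ hx₀).ne'

theorem le_of_le (h : IsUniformlyOrdered V u v) (hx₀ : x₀ ∈ V) (h₀ : u x₀ ≤ v x₀) :
    ∀ x ∈ V, u x ≤ v x := by
  rcases h₀.eq_or_lt with h₀ | h₀
  · exact fun x hx => (h.eq_of_eq hx₀ h₀ x hx).le
  · exact fun x hx => (h.lt_of_lt hx₀ h₀ x hx).le

end IsUniformlyOrdered

/-- The roots are `ξ 1 < ⋯ < ξ s`; `ξ 0 = 0` is the paper's convention `ξ_{a,p,0} ≡ 0`. -/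
structure IsRootSystem (V : Set ℝ) (f : ℝ → ℝ → ℝ) (s : ℕ) (ξ : ℕ → ℝ → ℝ) : Prop where
  zero : ∀ x ∈ V, ξ 0 x = 0
  continuousOn : ∀ j ≤ s, ContinuousOn (ξ j) V
  strictMonoOn : ∀ x ∈ V, StrictMonoOn (ξ · x) (Iic s)
  eq_zero_iff : ∀ x ∈ V, ∀ y, 0 < y → (f x y = 0 ↔ ∃ j, 1 ≤ j ∧ j ≤ s ∧ y = ξ j x)

theorem IsRootSystem.of_pos {V : Set ℝ} {f : ℝ → ℝ → ℝ} {s : ℕ} {ξ : ℕ → ℝ → ℝ}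
    (hzero : ∀ x, ξ 0 x = 0) (hcont : ∀ j, 1 ≤ j → j ≤ s → ContinuousOn (ξ j) V)
    (hpos : ∀ j, 1 ≤ j → j ≤ s → ∀ x ∈ V, 0 < ξ j x)
    (hlt : ∀ j j', 1 ≤ j → j < j' → j' ≤ s → ∀ x ∈ V, ξ j x < ξ j' x)
    (hf : ∀ x ∈ V, ∀ y, 0 < y → (f x y = 0 ↔ ∃ j, 1 ≤ j ∧ j ≤ s ∧ y = ξ j x)) :
    IsRootSystem V f s ξ where
  zero x _ := hzero x
  continuousOn j hj := by
    rcases Nat.eq_zero_or_pos j with rfl | hj1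
    · exact continuousOn_const.congr fun x _ => hzero x
    · exact hcont j hj1 hj
  strictMonoOn x hx i hi j hj hij := by
    rcases Nat.eq_zero_or_pos i with rfl | hi1
    · show ξ 0 x < ξ j x
      exact hzero x ▸ hpos j hij hj x hx
    · exact hlt i j hi1 hij hj x hx
  eq_zero_iff := hf

def rootBand (s : ℕ) (ξ : ℕ → ℝ → ℝ) (j : ℕ) (x : ℝ) : Set ℝ :=
  {y | ξ j x < y ∧ (j < s → y < ξ (j + 1) x)}

theorem rootBand_eq (s : ℕ) (ξ : ℕ → ℝ → ℝ) (j : ℕ) (x : ℝ) :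
    rootBand s ξ j x = if j < s then Ioo (ξ j x) (ξ (j + 1) x) else Ioi (ξ j x) := by
  ext y
  split_ifs with h <;> simp [rootBand, h]

theorem convex_rootBand (s : ℕ) (ξ : ℕ → ℝ → ℝ) (j : ℕ) (x : ℝ) :
    Convex ℝ (rootBand s ξ j x) := by
  rw [rootBand_eq]
  split_ifs
  exacts [convex_Ioo _ _, convex_Ioi _]

theorem isOpen_rootBand (s : ℕ) (ξ : ℕ → ℝ → ℝ) (j : ℕ) (x : ℝ) :
    IsOpen (rootBand s ξ j x) := by
  rw [rootBand_eq]
  split_ifs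
  exacts [isOpen_Ioo, isOpen_Ioi]

namespace IsRootSystem

variable {V : Set ℝ} {f : ℝ → ℝ → ℝ} {s : ℕ} {ξ : ℕ → ℝ → ℝ} (R : IsRootSystem V f s ξ)
include R

section

variable {x : ℝ} (hx : x ∈ V)
include hx

theorem lt {i j : ℕ} (hij : i < j) (hj : j ≤ s) : ξ i x < ξ j x :=
  R.strictMonoOn x hx (mem_Iic.2 (hij.le.trans hj)) (mem_Iic.2 hj) hij

theorem le {i j : ℕ} (hij : i ≤ j) (hj : j ≤ s) : ξ i x ≤ ξ j x :=
  (R.strictMonoOn x hx).monotoneOn (mem_Iic.2 (hij.trans hj)) (mem_Iic.2 hj) hij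

theorem nonneg {j : ℕ} (hj : j ≤ s) : 0 ≤ ξ j x :=
  R.zero x hx ▸ R.le hx (Nat.zero_le j) hj

theorem pos {j : ℕ} (h1 : 1 ≤ j) (hj : j ≤ s) : 0 < ξ j x :=
  R.zero x hx ▸ R.lt hx h1 hj

theorem apply_eq_zero {j : ℕ} (h1 : 1 ≤ j) (hj : j ≤ s) : f x (ξ j x) = 0 :=
  (R.eq_zero_iff x hx _ (R.pos hx h1 hj)).2 ⟨j, h1, hj, rfl⟩

theorem pos_of_mem_rootBand {j : ℕ} (hj : j ≤ s) {y : ℝ} (hy : y ∈ rootBand s ξ j x) :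
    0 < y :=
  (R.nonneg hx hj).trans_lt hy.1

theorem apply_ne_zero_of_mem_rootBand {j : ℕ} (hj : j ≤ s) {y : ℝ}
    (hy : y ∈ rootBand s ξ j x) : f x y ≠ 0 := by
  intro hfy
  obtain ⟨k, hk1, hks, rfl⟩ := (R.eq_zero_iff x hx y (R.pos_of_mem_rootBand hx hj hy)).1 hfy
  rcases le_or_gt k j with hkj | hjk
  · exact (R.le hx hkj hj).not_gt hy.1
  · exact (R.le hx hjk hks).not_gt (hy.2 (hjk.trans_le hks))

theorem rootBand_mem_nhdsGT (j : ℕ) : rootBand s ξ j x ∈ 𝓝[>] ξ j x := by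
  rw [rootBand_eq]
  split_ifs with h
  exacts [Ioo_mem_nhdsGT (R.lt hx j.lt_succ_self h), self_mem_nhdsWithin]

theorem mul_pos_of_mem_rootBand (hf : ContinuousOn (f x) (Ioi 0)) {j : ℕ} (hj : j ≤ s)
    {τ y₀ y : ℝ} (hy₀ : y₀ ∈ rootBand s ξ j x) (hy : y ∈ rootBand s ξ j x)
    (h : 0 < τ * f x y₀) : 0 < τ * f x y :=
  (convex_rootBand s ξ j x).isPreconnected.pos_of_pos
    (continuousOn_const.mul (hf.mono fun _ hz => R.pos_of_mem_rootBand hx hj hz))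
    (fun _ hz => mul_ne_zero (left_ne_zero_of_mul h.ne') (R.apply_ne_zero_of_mem_rootBand hx hj hz))
    hy₀ hy h

end

theorem eq_zero_of_eq_mul_rpow {x₀ : ℝ} (hx₀ : x₀ ∈ V) {c e : ℝ}
    (h : ∀ y, 0 < y → f x₀ y = c * y ^ e) : s = 0 := by
  by_contra hs
  have hs1 : 1 ≤ s := Nat.one_le_iff_ne_zero.2 hs
  have hy : ξ s x₀ + 1 ∈ rootBand s ξ s x₀ := ⟨lt_add_one _, (lt_irrefl s).elim⟩
  have hc : c ≠ 0 := by
    have := R.apply_ne_zero_of_mem_rootBand hx₀ le_rfl hy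
    rw [h _ (R.pos_of_mem_rootBand hx₀ le_rfl hy)] at this
    exact left_ne_zero_of_mul this
  have hpos := R.pos hx₀ hs1 le_rfl
  have := R.apply_eq_zero hx₀ hs1 le_rfl
  rw [h _ hpos] at this
  exact mul_ne_zero hc (Real.rpow_pos_of_pos hpos e).ne' this

/-- The anchor of `u` is the last root curve weakly below it. -/
theorem exists_anchor {x₀ : ℝ} (hx₀ : x₀ ∈ V) {u : ℝ → ℝ}
    (hu : ∀ i ≤ s, IsUniformlyOrdered V (ξ i) u) (hu₀ : 0 ≤ u x₀) :
    ∃ i ≤ s, ∀ x ∈ V, ξ i x ≤ u x ∧ (i < s → u x < ξ (i + 1) x) := by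
  classical
  set i := Nat.findGreatest (fun i => ξ i x₀ ≤ u x₀) s
  have hi : ξ i x₀ ≤ u x₀ := Nat.findGreatest_spec (P := fun i => ξ i x₀ ≤ u x₀) (Nat.zero_le s)
    (by rwa [R.zero x₀ hx₀])
  have his : i ≤ s := Nat.findGreatest_le s
  refine ⟨i, his, fun x hx => ⟨(hu i his).le_of_le hx₀ hi x hx, fun hlt => ?_⟩⟩
  have hnext : ¬ ξ (i + 1) x₀ ≤ u x₀ := Nat.findGreatest_is_greatest i.lt_succ_self hlt
  exact (hu (i + 1) hlt).symm.lt_of_lt hx₀ (not_le.1 hnext) x hx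

theorem anchor_eq_of_apply_eq_zero {x₀ : ℝ} (hx₀ : x₀ ∈ V) {i : ℕ} (hi : i ≤ s) {y : ℝ}
    (hy : 0 < y) (hle : ξ i x₀ ≤ y) (hnext : i < s → y < ξ (i + 1) x₀) (h : f x₀ y = 0) :
    ξ i x₀ = y := by
  obtain ⟨k, hk1, hks, rfl⟩ := (R.eq_zero_iff x₀ hx₀ y hy).1 h
  rcases le_or_gt k i with hki | hik
  · exact le_antisymm hle (R.le hx₀ hki hi)
  · exact absurd (hnext (hik.trans_le hks)) (R.le hx₀ hik hks).not_gt

theorem isUniformlyOrdered {f' : ℝ → ℝ → ℝ} {s' : ℕ} {ξ' : ℕ → ℝ → ℝ}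
    (R' : IsRootSystem V f' s' ξ')
    (htri : ∀ i k, 1 ≤ i → i ≤ s → 1 ≤ k → k ≤ s' → IsUniformlyOrdered V (ξ i) (ξ' k))
    {i k : ℕ} (hi : i ≤ s) (hk : k ≤ s') : IsUniformlyOrdered V (ξ i) (ξ' k) := by
  rcases Nat.eq_zero_or_pos i with rfl | hi1 <;> rcases Nat.eq_zero_or_pos k with rfl | hk1
  · exact .inr (.inl fun x hx => by rw [R.zero x hx, R'.zero x hx])
  · exact .inl fun x hx => R.zero x hx ▸ R'.pos hx hk1 hk
  · exact .inr (.inr fun x hx => R'.zero x hx ▸ R.pos hx hi1 hi)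
  · exact htri i k hi1 hi hk1 hk

end IsRootSystem

theorem strictMonoOn_of_hasDerivAt_pos {D : Set ℝ} (hD : Convex ℝ D) (hDo : IsOpen D)
    {f f' : ℝ → ℝ} (hf : ∀ y ∈ D, HasDerivAt f (f' y) y) (hf' : ∀ y ∈ D, 0 < f' y) :
    StrictMonoOn f D := by
  refine strictMonoOn_of_hasDerivWithinAt_pos (f' := f') hD
    (fun y hy => (hf y hy).continuousAt.continuousWithinAt) ?_ ?_
  · rw [hDo.interior_eq]
    exact fun y hy => (hf y hy).hasDerivWithinAt
  · rwa [hDo.interior_eq]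

def HasSupInfTrunc (V : Set ℝ) (f : ℝ → ℝ → ℝ) (u : ℝ → ℝ) : Prop :=
  ∃ c, IsSupInf2 c ∧ ∀ x ∈ V, ∀ y, 0 < y → c x y = if u x < y then f x y else 0

theorem HasSupInfTrunc.exists_add_mul {V : Set ℝ} {f g : ℝ → ℝ → ℝ} {u v : ℝ → ℝ}
    (hg : HasSupInfTrunc V g v) (hf : HasSupInfTrunc V f u) {b : ℝ} (hb : 0 < b) :
    ∃ c, IsSupInf2 c ∧ ∀ x ∈ V, ∀ y, 0 < y → c x y =
      (if v x < y then g x y else 0) + y / b * (if u x < y then f x y else 0) := by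
  obtain ⟨R, hR, hRv⟩ := hg
  obtain ⟨A, hA, hAv⟩ := hf
  refine ⟨_, hR.add (hA.const_mul_rpow (inv_nonneg.2 hb.le) 1), fun x hx y hy => ?_⟩
  rw [hRv x hx y hy, hAv x hx y hy, Real.rpow_one, div_eq_inv_mul]

theorem hasSupInfTrunc_of_sign {V : Set ℝ} {f : ℝ → ℝ → ℝ} {u : ℝ → ℝ} {c₀ t : ℝ → ℝ → ℝ}
    {τ : ℝ} (hτ : τ ≠ 0) (hc₀ : IsSupInf2 c₀) (ht : IsSupInf2 t)
    (hbelow : ∀ x ∈ V, ∀ y, 0 < y → y ≤ u x → τ * c₀ x y ≤ 0 ∧ t x y = 0)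
    (habove : ∀ x ∈ V, ∀ y, 0 < y → u x < y →
      c₀ x y = f x y ∧ (t x y = f x y ∨ t x y = 0 ∧ 0 ≤ τ * f x y)) :
    HasSupInfTrunc V f u := by
  rcases hτ.lt_or_gt with hτ | hτ
  · refine ⟨fun x y => min (c₀ x y) (max 0 (t x y)),
      hc₀.min (isGenPoly2_zero.isSupInf2.max ht), fun x hx y hy => ?_⟩
    dsimp only
    split_ifs with h
    · obtain ⟨hc, ht | ⟨ht, hf⟩⟩ := habove x hx y hy h <;> rw [hc, ht]
      · exact min_eq_left (le_max_right _ _)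
      · exact min_eq_left (by rw [max_self]; nlinarith)
    · obtain ⟨hc, ht⟩ := hbelow x hx y hy (not_lt.1 h)
      rw [ht, max_self]
      exact min_eq_right (by nlinarith)
  · refine ⟨fun x y => max (c₀ x y) (min 0 (t x y)),
      hc₀.max (isGenPoly2_zero.isSupInf2.min ht), fun x hx y hy => ?_⟩
    dsimp only
    split_ifs with h
    · obtain ⟨hc, ht | ⟨ht, hf⟩⟩ := habove x hx y hy h <;> rw [hc, ht]
      · exact max_eq_left (min_le_right _ _)
      · exact max_eq_left (by rw [min_self]; nlinarith)
    · obtain ⟨hc, ht⟩ := hbelow x hx y hy (not_lt.1 h)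
      rw [ht, min_self]
      exact max_eq_right (by nlinarith)

/-- The conclusions of the projection lemma for the family `a` on the strip `V`. -/
structure IsRootFamily {ι : Type*} (V : Set ℝ) (a : ι → ℝ → ℝ → ℝ) (s : ι → ℕ)
    (ξ : ι → ℕ → ℝ → ℝ) : Prop where
  isPreconnected : IsPreconnected V
  continuousOn : ∀ n, ContinuousOn (uncurry (a n)) (V ×ˢ Ioi 0)
  isRootSystem : ∀ n, IsRootSystem V (a n) (s n) (ξ n)
  uniformlyOrdered : ∀ n m i k, i ≤ s n → k ≤ s m → IsUniformlyOrdered V (ξ n i) (ξ m k)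

namespace IsRootFamily

variable {ι : Type*} {V : Set ℝ} {a : ι → ℝ → ℝ → ℝ} {s : ι → ℕ} {ξ : ι → ℕ → ℝ → ℝ}
  (F : IsRootFamily V a s ξ) {x₀ : ℝ}
include F

theorem continuousOn_apply (n : ι) {x : ℝ} (hx : x ∈ V) : ContinuousOn (a n x) (Ioi 0) :=
  (F.continuousOn n).uncurry_left x hx

theorem exists_sign_on_rootBand (hx₀ : x₀ ∈ V) {n m : ι} {j i : ℕ} (hjs : j ≤ s n) (his : i ≤ s m)
    (hlt : ∀ x ∈ V, ξ m i x < ξ n j x) (hnext : ∀ x ∈ V, i < s m → ξ n j x < ξ m (i + 1) x) :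
    ∃ τ, ∀ x ∈ V, ∀ y ∈ rootBand (s m) (ξ m) i x, 0 < τ * a m x y := by
  have Rm := F.isRootSystem m
  set mid : ℝ → ℝ := fun x => (ξ m i x + ξ n j x) / 2
  have hmid : ∀ x ∈ V, mid x ∈ rootBand (s m) (ξ m) i x := fun x hx =>
    ⟨by simp only [mid]; linarith [hlt x hx],
      fun h => by simp only [mid]; linarith [hlt x hx, hnext x hx h]⟩
  have hne : ∀ x ∈ V, a m x (mid x) ≠ 0 := fun x hx =>
    Rm.apply_ne_zero_of_mem_rootBand hx his (hmid x hx)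
  have hcont : ContinuousOn (fun x => a m x (mid x)) V :=
    (F.continuousOn m).comp (continuousOn_id.prodMk
      (((Rm.continuousOn i his).add ((F.isRootSystem n).continuousOn j hjs)).div_const 2))
      fun x hx => ⟨hx, Rm.pos_of_mem_rootBand hx his (hmid x hx)⟩
  -- the sign at the midpoint does not depend on `x`, since `V` is preconnected
  refine ⟨a m x₀ (mid x₀), fun x hx y hy => Rm.mul_pos_of_mem_rootBand hx
    (F.continuousOn_apply m hx) his (hmid x hx) hy ?_⟩
  exact F.isPreconnected.pos_of_pos (continuousOn_const.mul hcont)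
    (fun z hz => mul_ne_zero (hne x₀ hx₀) (hne z hz)) hx₀ hx (mul_self_pos.2 (hne x₀ hx₀))

/-- `a n` is strictly monotone in `y` on the root band of its `y`-derivative `a m` through the
root `ξ n j`. -/
theorem sign_near_root {n m : ι} {j i : ℕ} (hj : 1 ≤ j) (hjs : j ≤ s n) (his : i ≤ s m)
    (hderiv : ∀ x ∈ V, ∀ y, 0 < y → HasDerivAt (a n x) (a m x y) y)
    (hlt : ∀ x ∈ V, ξ m i x < ξ n j x) (hnext : ∀ x ∈ V, i < s m → ξ n j x < ξ m (i + 1) x)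
    {τ : ℝ} (hτ : ∀ x ∈ V, ∀ y ∈ rootBand (s m) (ξ m) i x, 0 < τ * a m x y) {x : ℝ}
    (hx : x ∈ V) :
    (∀ y, ξ m i x < y → y ≤ ξ n j x → τ * a n x y ≤ 0) ∧
      ∀ y ∈ rootBand (s n) (ξ n) j x, 0 < τ * a n x y := by
  have Rn := F.isRootSystem n
  have Rm := F.isRootSystem m
  have hmono : StrictMonoOn (fun y => τ * a n x y) (rootBand (s m) (ξ m) i x) :=
    strictMonoOn_of_hasDerivAt_pos (convex_rootBand _ _ _ _) (isOpen_rootBand _ _ _ _)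
      (fun y hy => (hderiv x hx y (Rm.pos_of_mem_rootBand hx his hy)).const_mul τ) (hτ x hx)
  have hroot : ξ n j x ∈ rootBand (s m) (ξ m) i x := ⟨hlt x hx, hnext x hx⟩
  have hzero : τ * a n x (ξ n j x) = 0 := by rw [Rn.apply_eq_zero hx hj hjs, mul_zero]
  refine ⟨fun y hy hyle => ?_, ?_⟩
  · calc τ * a n x y ≤ τ * a n x (ξ n j x) :=
          (hmono.le_iff_le ⟨hy, fun h => hyle.trans_lt (hnext x hx h)⟩ hroot).2 hyle
      _ = 0 := hzero
  obtain ⟨y₁, hy₁, hy₁'⟩ := Filter.nonempty_of_mem (Filter.inter_mem (Rn.rootBand_mem_nhdsGT hx j)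
    (mem_nhdsWithin_of_mem_nhds ((isOpen_rootBand _ _ _ _).mem_nhds hroot)))
  refine fun y hy => Rn.mul_pos_of_mem_rootBand hx (F.continuousOn_apply n hx) hjs hy₁ hy ?_
  calc 0 = τ * a n x (ξ n j x) := hzero.symm
    _ < τ * a n x y₁ := hmono hroot hy₁' hy₁.1

/-- Below `ξ n j` the remainder `a n₂ = a n - (y / b) a n₁` has the sign of `a n`, so it has no
root between the anchor of `a n₁` and `ξ n j`. -/
theorem sign_remainder (hx₀ : x₀ ∈ V) {n n₁ n₂ : ι} {b : ℝ} (hb : 0 < b)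
    (hsplit : ∀ x ∈ V, ∀ y, 0 < y → a n x y = a n₂ x y + y / b * a n₁ x y)
    {j i₁ i₂ : ℕ} (hi₁ : i₁ ≤ s n₁) (hi₂ : i₂ ≤ s n₂)
    (hlt₁ : ∀ x ∈ V, ξ n₁ i₁ x < ξ n j x)
    (hnext₁ : ∀ x ∈ V, i₁ < s n₁ → ξ n j x < ξ n₁ (i₁ + 1) x)
    (hle₂ : ∀ x ∈ V, ξ n₂ i₂ x ≤ ξ n j x)
    (hnext₂ : ∀ x ∈ V, i₂ < s n₂ → ξ n j x < ξ n₂ (i₂ + 1) x)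
    {τ : ℝ} (hτ₁ : ∀ x ∈ V, ∀ y ∈ rootBand (s n₁) (ξ n₁) i₁ x, 0 < τ * a n₁ x y)
    (hτ : ∀ x ∈ V, ∀ y, ξ n₁ i₁ x < y → y ≤ ξ n j x → τ * a n x y ≤ 0) :
    ∀ x ∈ V, ξ n₂ i₂ x ≤ ξ n₁ i₁ x ∧
      ∀ y, ξ n₂ i₂ x < y → y ≤ ξ n₁ i₁ x → τ * a n₂ x y < 0 := by
  have R₁ := F.isRootSystem n₁
  have R₂ := F.isRootSystem n₂
  have hneg : ∀ x ∈ V, ∀ y, ξ n₁ i₁ x < y → y ≤ ξ n j x → τ * a n₂ x y < 0 := by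
    intro x hx y hy hyle
    have hy0 : 0 < y := (R₁.nonneg hx hi₁).trans_lt hy
    have h₁ := mul_pos (div_pos hy0 hb)
      (hτ₁ x hx y ⟨hy, fun h => hyle.trans_lt (hnext₁ x hx h)⟩)
    have : τ * a n₂ x y = τ * a n x y - y / b * (τ * a n₁ x y) := by
      rw [hsplit x hx y hy0]; ring
    linarith [hτ x hx y hy hyle]
  have hle : ∀ x ∈ V, ξ n₂ i₂ x ≤ ξ n₁ i₁ x := by
    refine (F.uniformlyOrdered n₂ n₁ i₂ i₁ hi₂ hi₁).le_of_le hx₀ (not_lt.1 fun h => ?_)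
    have hi₂0 : 1 ≤ i₂ := Nat.one_le_iff_ne_zero.2 fun h0 => by
      subst h0; rw [R₂.zero x₀ hx₀] at h; exact h.not_ge (R₁.nonneg hx₀ hi₁)
    exact (hneg x₀ hx₀ _ h (hle₂ x₀ hx₀)).ne (by rw [R₂.apply_eq_zero hx₀ hi₂0 hi₂, mul_zero])
  refine fun x hx => ⟨hle x hx, fun y hy hyle => ?_⟩
  -- `a n₂` has no root between its anchor and `ξ n j`, so it keeps the sign it has there
  have hband : ∀ y', ξ n₂ i₂ x < y' → y' ≤ ξ n j x → y' ∈ rootBand (s n₂) (ξ n₂) i₂ x :=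
    fun y' h h' => ⟨h, fun hi => h'.trans_lt (hnext₂ x hx hi)⟩
  have := R₂.mul_pos_of_mem_rootBand (τ := -τ) hx (F.continuousOn_apply n₂ hx) hi₂
    (hband _ ((hle x hx).trans_lt (hlt₁ x hx)) le_rfl) (hband y hy (hyle.trans (hlt₁ x hx).le))
    (by linarith [hneg x hx _ (hlt₁ x hx) le_rfl])
  linarith

/-- If `∂(a n)/∂y = a n₁` vanishes on the graph of `ξ n j`, then so does the remainder `a n₂`,
and their combination `c₀` is already the truncation of `a n`. -/
theorem hasSupInfTrunc_of_anchor_eq (hx₀ : x₀ ∈ V) {n n₁ n₂ : ι} {b : ℝ}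
    (hsplit : ∀ x ∈ V, ∀ y, 0 < y → a n x y = a n₂ x y + y / b * a n₁ x y)
    {j i₁ i₂ : ℕ} (hj : 1 ≤ j) (hjs : j ≤ s n) (hi₁ : i₁ ≤ s n₁) (hi₂ : i₂ ≤ s n₂)
    (heq₁ : ∀ x ∈ V, ξ n₁ i₁ x = ξ n j x) (hle₂ : ∀ x ∈ V, ξ n₂ i₂ x ≤ ξ n j x)
    (hnext₂ : ∀ x ∈ V, i₂ < s n₂ → ξ n j x < ξ n₂ (i₂ + 1) x) {c₀ : ℝ → ℝ → ℝ}
    (hc₀ : IsSupInf2 c₀) (hc₀v : ∀ x ∈ V, ∀ y, 0 < y → c₀ x y =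
      (if ξ n₂ i₂ x < y then a n₂ x y else 0) + y / b * (if ξ n₁ i₁ x < y then a n₁ x y else 0)) :
    HasSupInfTrunc V (a n) (ξ n j) := by
  have Rn := F.isRootSystem n
  have R₁ := F.isRootSystem n₁
  have hu := Rn.pos hx₀ hj hjs
  have hi₁0 : 1 ≤ i₁ := Nat.one_le_iff_ne_zero.2 fun h0 => by
    subst h0; linarith [R₁.zero x₀ hx₀, heq₁ x₀ hx₀]
  have hr0 : a n₂ x₀ (ξ n j x₀) = 0 := by
    have := hsplit x₀ hx₀ _ hu
    rwa [Rn.apply_eq_zero hx₀ hj hjs, ← heq₁ x₀ hx₀, R₁.apply_eq_zero hx₀ hi₁0 hi₁, mul_zero,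
      add_zero, heq₁ x₀ hx₀, eq_comm] at this
  have heq₂ := (F.uniformlyOrdered n₂ n i₂ j hi₂ hjs).eq_of_eq hx₀
    ((F.isRootSystem n₂).anchor_eq_of_apply_eq_zero hx₀ hi₂ hu (hle₂ x₀ hx₀) (hnext₂ x₀ hx₀) hr0)
  refine ⟨c₀, hc₀, fun x hx y hy => ?_⟩
  rw [hc₀v x hx y hy, heq₁ x hx, heq₂ x hx]
  split_ifs
  · rw [hsplit x hx y hy]
  · ring

/-- If the anchor of `∂(a n)/∂y = a n₁` lies strictly below `ξ n j`, then `c₀` has, below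
`ξ n j`, the sign opposite to that of `a n` just above `ξ n j`, and is glued with the truncation
`t` at the next root. -/
theorem hasSupInfTrunc_of_anchor_lt (hx₀ : x₀ ∈ V) {n n₁ n₂ : ι} {b : ℝ} (hb : 0 < b)
    (hderiv : ∀ x ∈ V, ∀ y, 0 < y → HasDerivAt (a n x) (a n₁ x y) y)
    (hsplit : ∀ x ∈ V, ∀ y, 0 < y → a n x y = a n₂ x y + y / b * a n₁ x y)
    {j i₁ i₂ : ℕ} (hj : 1 ≤ j) (hjs : j ≤ s n) (hi₁ : i₁ ≤ s n₁) (hi₂ : i₂ ≤ s n₂)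
    (hlt₁ : ∀ x ∈ V, ξ n₁ i₁ x < ξ n j x)
    (hnext₁ : ∀ x ∈ V, i₁ < s n₁ → ξ n j x < ξ n₁ (i₁ + 1) x)
    (hle₂ : ∀ x ∈ V, ξ n₂ i₂ x ≤ ξ n j x)
    (hnext₂ : ∀ x ∈ V, i₂ < s n₂ → ξ n j x < ξ n₂ (i₂ + 1) x) {c₀ : ℝ → ℝ → ℝ}
    (hc₀ : IsSupInf2 c₀) (hc₀v : ∀ x ∈ V, ∀ y, 0 < y → c₀ x y =
      (if ξ n₂ i₂ x < y then a n₂ x y else 0) + y / b * (if ξ n₁ i₁ x < y then a n₁ x y else 0))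
    {t : ℝ → ℝ → ℝ} (ht : IsSupInf2 t)
    (htv : ∀ x ∈ V, ∀ y, 0 < y → t x y = if j < s n ∧ ξ n (j + 1) x < y then a n x y else 0) :
    HasSupInfTrunc V (a n) (ξ n j) := by
  have Rn := F.isRootSystem n
  obtain ⟨τ, hτ₁⟩ := F.exists_sign_on_rootBand hx₀ hjs hi₁ hlt₁ hnext₁
  have hsign := fun x hx => F.sign_near_root hj hjs hi₁ hderiv hlt₁ hnext₁ hτ₁ (x := x) hx
  have hrem := F.sign_remainder hx₀ hb hsplit hi₁ hi₂ hlt₁ hnext₁ hle₂ hnext₂ hτ₁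
    fun x hx => (hsign x hx).1
  have hτ0 : τ ≠ 0 := left_ne_zero_of_mul (hτ₁ x₀ hx₀ _ ⟨hlt₁ x₀ hx₀, hnext₁ x₀ hx₀⟩).ne'
  refine hasSupInfTrunc_of_sign hτ0 hc₀ ht (fun x hx y hy hyle => ⟨?_, ?_⟩)
    fun x hx y hy h => ⟨?_, ?_⟩
  · rw [hc₀v x hx y hy]
    split_ifs with hr ha' ha'
    · rw [← hsplit x hx y hy]
      exact (hsign x hx).1 y ha' hyle
    · simpa using ((hrem x hx).2 y hr (not_lt.1 ha')).le
    · exact absurd (((hrem x hx).1).trans_lt ha') hr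
    · simp
  · rw [htv x hx y hy, if_neg fun h => (hyle.trans (Rn.lt hx j.lt_succ_self h.1).le).not_gt h.2]
  · rw [hc₀v x hx y hy, if_pos ((hle₂ x hx).trans_lt h), if_pos ((hlt₁ x hx).trans h),
      hsplit x hx y hy]
  · rw [htv x hx y hy]
    split_ifs with h'
    · exact .inl rfl
    refine .inr ⟨rfl, ?_⟩
    by_cases hjs' : j < s n
    · rcases (not_lt.1 fun h'' => h' ⟨hjs', h''⟩).lt_or_eq with hlt' | heq'
      · exact ((hsign x hx).2 y ⟨h, fun _ => hlt'⟩).le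
      · rw [heq', Rn.apply_eq_zero hx (by omega) hjs', mul_zero]
    · exact ((hsign x hx).2 y ⟨h, fun h'' => absurd h'' hjs'⟩).le

/-- The Mahé construction: with `A` and `R` the truncations of `a n₁ = ∂(a n)/∂y` and of the
remainder `a n₂` at their anchors, `c₀ = R + (y / b) A` equals `a n` above `ξ n j`. -/
theorem hasSupInfTrunc_of_deriv_of_succ (hx₀ : x₀ ∈ V) {n n₁ n₂ : ι} {b : ℝ} (hb : 0 < b)
    (hderiv : ∀ x ∈ V, ∀ y, 0 < y → HasDerivAt (a n x) (a n₁ x y) y)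
    (hsplit : ∀ x ∈ V, ∀ y, 0 < y → a n x y = a n₂ x y + y / b * a n₁ x y)
    (h₁ : ∀ i ≤ s n₁, HasSupInfTrunc V (a n₁) (ξ n₁ i))
    (h₂ : ∀ i ≤ s n₂, HasSupInfTrunc V (a n₂) (ξ n₂ i)) {j : ℕ} (hj : 1 ≤ j) (hjs : j ≤ s n)
    {t : ℝ → ℝ → ℝ} (ht : IsSupInf2 t)
    (htv : ∀ x ∈ V, ∀ y, 0 < y → t x y = if j < s n ∧ ξ n (j + 1) x < y then a n x y else 0) :
    HasSupInfTrunc V (a n) (ξ n j) := by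
  have hu := ((F.isRootSystem n).pos hx₀ hj hjs).le
  obtain ⟨i₁, hi₁, hanc₁⟩ := (F.isRootSystem n₁).exists_anchor hx₀
    (fun i hi => F.uniformlyOrdered n₁ n i j hi hjs) hu
  obtain ⟨i₂, hi₂, hanc₂⟩ := (F.isRootSystem n₂).exists_anchor hx₀
    (fun i hi => F.uniformlyOrdered n₂ n i j hi hjs) hu
  obtain ⟨c₀, hc₀, hc₀v⟩ := (h₂ i₂ hi₂).exists_add_mul (h₁ i₁ hi₁) hb
  rcases (hanc₁ x₀ hx₀).1.eq_or_lt with heq | hlt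
  · exact F.hasSupInfTrunc_of_anchor_eq hx₀ hsplit hj hjs hi₁ hi₂
      ((F.uniformlyOrdered n₁ n i₁ j hi₁ hjs).eq_of_eq hx₀ heq) (fun x hx => (hanc₂ x hx).1)
      (fun x hx => (hanc₂ x hx).2) hc₀ hc₀v
  · exact F.hasSupInfTrunc_of_anchor_lt hx₀ hb hderiv hsplit hj hjs hi₁ hi₂
      ((F.uniformlyOrdered n₁ n i₁ j hi₁ hjs).lt_of_lt hx₀ hlt) (fun x hx => (hanc₁ x hx).2)
      (fun x hx => (hanc₂ x hx).1) (fun x hx => (hanc₂ x hx).2) hc₀ hc₀v ht htv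

theorem hasSupInfTrunc_of_deriv (hx₀ : x₀ ∈ V) {n n₁ n₂ : ι} {b : ℝ} (hb : 0 < b)
    (hderiv : ∀ x ∈ V, ∀ y, 0 < y → HasDerivAt (a n x) (a n₁ x y) y)
    (hsplit : ∀ x ∈ V, ∀ y, 0 < y → a n x y = a n₂ x y + y / b * a n₁ x y)
    (h₁ : ∀ i ≤ s n₁, HasSupInfTrunc V (a n₁) (ξ n₁ i))
    (h₂ : ∀ i ≤ s n₂, HasSupInfTrunc V (a n₂) (ξ n₂ i)) {j : ℕ} (hj : 1 ≤ j) (hjs : j ≤ s n) :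
    HasSupInfTrunc V (a n) (ξ n j) := by
  induction hjs using Nat.decreasingInduction with
  | self =>
    exact F.hasSupInfTrunc_of_deriv_of_succ hx₀ hb hderiv hsplit h₁ h₂ hj le_rfl
      isGenPoly2_zero.isSupInf2 fun x _ y _ => by simp
  | of_succ k hk ih =>
    obtain ⟨t, ht, htv⟩ := ih (by omega)
    exact F.hasSupInfTrunc_of_deriv_of_succ hx₀ hb hderiv hsplit h₁ h₂ hj hk.le ht
      fun x hx y hy => by rw [htv x hx y hy]; simp [hk]

end IsRootFamily

theorem IsSupInf2.hasSupInfTrunc {V : Set ℝ} {f : ℝ → ℝ → ℝ} (hf : IsSupInf2 f) {u : ℝ → ℝ}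
    (hu : ∀ x ∈ V, u x ≤ 0) : HasSupInfTrunc V f u :=
  ⟨f, hf, fun x hx _ hy => (if_pos ((hu x hx).trans_lt hy)).symm⟩

theorem HasSupInfTrunc.rpow_mul {V : Set ℝ} {f g : ℝ → ℝ → ℝ} {u v : ℝ → ℝ}
    (h : HasSupInfTrunc V f u) (e : ℝ) (hg : ∀ x ∈ V, ∀ y, 0 < y → g x y = y ^ e * f x y)
    (hv : ∀ x ∈ V, v x = u x) : HasSupInfTrunc V g v := by
  obtain ⟨c, hc, hcv⟩ := h
  refine ⟨fun x y => 1 * y ^ e * c x y, hc.const_mul_rpow zero_le_one e, fun x hx y hy => ?_⟩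
  dsimp only
  rw [hcv x hx y hy, hv x hx, hg x hx y hy]
  split_ifs <;> ring

/-- The reductions of the induction behind the Mahé lemma: `a n` is a monomial in `y`, or is
expressed through members of the family of smaller measure `μ`. -/
inductive MaheDescent {ι : Type*} (a : ι → ℝ → ℝ → ℝ) (μ : ι → ℕ) (n : ι) : Prop
  | monomial (c : ℝ → ℝ) (e : ℝ) (h : ∀ x y, 0 < x → 0 < y → a n x y = c x * y ^ e)
  | deriv (n₁ n₂ : ι) (b : ℝ) (h₁ : μ n₁ < μ n) (h₂ : μ n₂ < μ n) (hb : 0 < b)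
      (hderiv : ∀ x y, 0 < x → 0 < y → HasDerivAt (a n x) (a n₁ x y) y)
      (hsplit : ∀ x y, 0 < x → 0 < y → a n x y = a n₂ x y + y / b * a n₁ x y)
  | rpow_mul (m : ι) (e : ℝ) (hm : μ m < μ n)
      (h : ∀ x y, 0 < x → 0 < y → a n x y = y ^ e * a m x y)

theorem IsRootFamily.hasSupInfTrunc {ι : Type*} {V : Set ℝ} {a : ι → ℝ → ℝ → ℝ} {s : ι → ℕ}
    {ξ : ι → ℕ → ℝ → ℝ} (F : IsRootFamily V a s ξ) (hV : V ⊆ Ioi 0)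
    (hgen : ∀ n, IsGenPoly2 (a n)) {μ : ι → ℕ} (hμ : ∀ n, MaheDescent a μ n) (n : ι) {j : ℕ}
    (hj : j ≤ s n) : HasSupInfTrunc V (a n) (ξ n j) := by
  rcases V.eq_empty_or_nonempty with rfl | ⟨x₀, hx₀⟩
  · exact ⟨_, isGenPoly2_zero.isSupInf2, fun x hx => (notMem_empty x hx).elim⟩
  induction hμn : μ n using Nat.strong_induction_on generalizing n j with
  | _ k ih =>
    subst hμn
    have Rn := F.isRootSystem n
    rcases Nat.eq_zero_or_pos j with rfl | hj1
    · exact (hgen n).isSupInf2.hasSupInfTrunc fun x hx => (Rn.zero x hx).le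
    cases hμ n with
    | monomial c e h =>
      exact absurd (Rn.eq_zero_of_eq_mul_rpow hx₀ (h x₀ · (hV hx₀))) (by omega)
    | deriv n₁ n₂ b h₁ h₂ hb hderiv hsplit =>
      exact F.hasSupInfTrunc_of_deriv hx₀ hb (fun x hx y => hderiv x y (hV hx))
        (fun x hx y => hsplit x y (hV hx)) (fun i hi => ih _ h₁ n₁ hi rfl)
        (fun i hi => ih _ h₂ n₂ hi rfl) hj1 hj
    | rpow_mul m e hm h =>
      have hpos := Rn.pos hx₀ hj1 hj
      have hroot : a m x₀ (ξ n j x₀) = 0 := by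
        have := Rn.apply_eq_zero hx₀ hj1 hj
        rw [h _ _ (hV hx₀) hpos] at this
        exact (mul_eq_zero.1 this).resolve_left (Real.rpow_pos_of_pos hpos e).ne'
      obtain ⟨i, -, his, hi⟩ := ((F.isRootSystem m).eq_zero_iff x₀ hx₀ _ hpos).1 hroot
      exact (ih _ hm m his rfl).rpow_mul e (fun x hx y hy => h x y (hV hx) hy)
        ((F.uniformlyOrdered n m j i hj his).eq_of_eq hx₀ hi)

theorem hasDerivAt_sum_mul_rpow {ι : Type*} [Fintype ι] (b e : ι → ℝ) {y : ℝ} (hy : 0 < y) :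
    HasDerivAt (fun y => ∑ i, b i * y ^ e i) (∑ i, b i * (e i * y ^ (e i - 1))) y :=
  HasDerivAt.fun_sum fun i _ => (Real.hasDerivAt_rpow_const (Or.inl hy.ne')).const_mul (b i)

section ClosedFamily

variable {ι : Type*} {a : ι → ℝ → ℝ → ℝ} {K : ι → ℕ} (hK : ∀ n, 0 < K n)
  {β : (n : ι) → Fin (K n) → ℝ} (hβ : ∀ n, StrictMono (β n))
  {aa : (n : ι) → Fin (K n) → ℝ → ℝ} (haanz : ∀ n i, ∃ x : ℝ, 0 < x ∧ aa n i x ≠ 0)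
  (ha : ∀ n, ∀ x y : ℝ, 0 < x → 0 < y → a n x y = ∑ i, aa n i x * y ^ β n i)
include hβ haanz ha

theorem card_lt_of_deriv {n n' : ι} (h0 : β n ⟨0, hK n⟩ = 0)
    (hn' : ∀ x y : ℝ, 0 < x → 0 < y → a n' x y = ∑ i, aa n i x * (β n i * y ^ (β n i - 1))) :
    K n' < K n :=
  card_lt_of_sum_rpow_eq (hβ n').injective (haanz n')
    (c := fun i x => aa n i x * β n i) (g := fun i => β n i - 1)
    (fun x y hx hy => by
      rw [← ha n' x y hx hy, hn' x y hx hy]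
      exact Finset.sum_congr rfl fun i _ => by ring)
    (k₀ := ⟨0, hK n⟩) fun x => by rw [h0, mul_zero]

theorem card_lt_of_remainder {n n' : ι}
    (hn' : ∀ x y : ℝ, 0 < x → 0 < y →
      a n' x y = a n x y - y / β n ⟨K n - 1, Nat.sub_lt (hK n) one_pos⟩ *
        (∑ i, aa n i x * (β n i * y ^ (β n i - 1))))
    (htop : β n ⟨K n - 1, Nat.sub_lt (hK n) one_pos⟩ ≠ 0) :
    K n' < K n := by
  set βK := β n ⟨K n - 1, Nat.sub_lt (hK n) one_pos⟩
  refine card_lt_of_sum_rpow_eq (hβ n').injective (haanz n')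
    (c := fun i x => aa n i x * (1 - β n i / βK)) (g := β n) (fun x y hx hy => ?_)
    (k₀ := ⟨K n - 1, Nat.sub_lt (hK n) one_pos⟩) fun x => by simp [βK, div_self htop]
  rw [← ha n' x y hx hy, hn' x y hx hy, ha n x y hx hy, Finset.mul_sum, ← Finset.sum_sub_distrib]
  refine Finset.sum_congr rfl fun i _ => ?_
  rw [Real.rpow_sub_one hy.ne']
  field_simp

theorem card_le_and_exponent_eq_zero_of_rpow_mul {n n' : ι}
    (hn' : ∀ x y : ℝ, 0 < x → 0 < y → a n' x y = y ^ (-β n ⟨0, hK n⟩) * a n x y) :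
    K n' ≤ K n ∧ β n' ⟨0, hK n'⟩ = 0 := by
  set β₀ := β n ⟨0, hK n⟩
  have hexp : ∀ x y : ℝ, 0 < x → 0 < y →
      ∑ k, aa n' k x * y ^ β n' k = ∑ i, aa n i x * y ^ (β n i - β₀) := by
    intro x y hx hy
    rw [← ha n' x y hx hy, hn' x y hx hy, ha n x y hx hy, Finset.mul_sum]
    refine Finset.sum_congr rfl fun i _ => ?_
    rw [sub_eq_add_neg, Real.rpow_add hy]
    ring
  have hinj : Injective fun i => β n i - β₀ := fun i i' h => (hβ n).injective (sub_left_injective h)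
  obtain ⟨φ, hφ, hφe⟩ := exists_injective_of_sum_rpow_eq (hβ n').injective (haanz n') hexp
  refine ⟨by simpa using Fintype.card_le_of_injective φ hφ, le_antisymm ?_ ?_⟩
  · obtain ⟨x, hx, hax⟩ := haanz n ⟨0, hK n⟩
    obtain ⟨k, hk, -⟩ :=
      exists_exponent_eq_of_sum_rpow_eq hinj (fun y hy => (hexp x y hx hy).symm) hax
    calc β n' ⟨0, hK n'⟩ ≤ β n' k := (hβ n').monotone (Fin.mk_le_of_le_val (Nat.zero_le _))
      _ = 0 := by rw [hk, sub_self]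
  · rw [← (hφe ⟨0, hK n'⟩).1]
    exact sub_nonneg.2 ((hβ n).monotone (Fin.mk_le_of_le_val (Nat.zero_le _)))

/-- Dividing by `y ^ β₀` keeps the number of `y`-terms, whence the `+ 1` in the measure. -/
theorem maheDescent_of_closed
    (hclosed₁ : ∀ n, 1 < K n → β n ⟨0, hK n⟩ = 0 →
      ∃ n', ∀ x y : ℝ, 0 < x → 0 < y →
        a n' x y = ∑ i, aa n i x * (β n i * y ^ (β n i - 1)))
    (hclosed₂ : ∀ n, 1 < K n → β n ⟨0, hK n⟩ ≠ 0 →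
      ∃ n', ∀ x y : ℝ, 0 < x → 0 < y →
        a n' x y = y ^ (-(β n ⟨0, hK n⟩)) * a n x y)
    (hclosed₃ : ∀ n, 1 < K n → β n ⟨0, hK n⟩ = 0 →
      ∃ n', ∀ x y : ℝ, 0 < x → 0 < y →
        a n' x y = a n x y - y / β n ⟨K n - 1, Nat.sub_lt (hK n) one_pos⟩ *
          (∑ i, aa n i x * (β n i * y ^ (β n i - 1))))
    (n : ι) : MaheDescent a (fun n => 2 * K n + if β n ⟨0, hK n⟩ = 0 then 0 else 1) n := by
  rcases (Nat.succ_le_of_lt (hK n)).eq_or_lt with h1 | h1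
  · refine .monomial (aa n ⟨0, hK n⟩) (β n ⟨0, hK n⟩) fun x y hx hy => ?_
    rw [ha n x y hx hy]
    exact Fintype.sum_eq_single _ fun i hi => absurd (Fin.ext (by have := i.isLt; omega)) hi
  by_cases h0 : β n ⟨0, hK n⟩ = 0
  · obtain ⟨n₁, hn₁⟩ := hclosed₁ n h1 h0
    obtain ⟨n₂, hn₂⟩ := hclosed₃ n h1 h0
    have htop : 0 < β n ⟨K n - 1, Nat.sub_lt (hK n) one_pos⟩ :=
      h0 ▸ hβ n (Fin.mk_lt_mk.2 (by omega))
    have hK₁ := card_lt_of_deriv hK hβ haanz ha h0 hn₁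
    have hK₂ := card_lt_of_remainder hK hβ haanz ha hn₂ htop.ne'
    refine .deriv n₁ n₂ _ (by simp only [h0]; split_ifs <;> omega)
      (by simp only [h0]; split_ifs <;> omega) htop (fun x y hx hy => ?_) fun x y hx hy => ?_
    · rw [hn₁ x y hx hy]
      refine (hasDerivAt_sum_mul_rpow _ _ hy).congr_of_eventuallyEq ?_
      filter_upwards [Ioi_mem_nhds hy] with y' hy' using ha n x y' hx hy'
    · rw [hn₂ x y hx hy, hn₁ x y hx hy]
      ring
  · obtain ⟨m, hm⟩ := hclosed₂ n h1 h0
    obtain ⟨hKm, hm0⟩ := card_le_and_exponent_eq_zero_of_rpow_mul hK hβ haanz ha hm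
    refine .rpow_mul m (β n ⟨0, hK n⟩) (by simp only [h0, hm0, ↓reduceIte]; omega)
      fun x y hx hy => ?_
    rw [hm x y hx hy, ← mul_assoc, ← Real.rpow_add hy, add_neg_cancel, Real.rpow_zero, one_mul]

end ClosedFamily

theorem vstrip_subset_Ioi {γ : ℕ → ℝ} {L p : ℕ} (hγ0 : γ 0 = 0) (hγ : StrictMonoOn γ (Iic L))
    (hp : p ≤ L) : vstrip γ L p ⊆ Ioi 0 := by
  have h0 : 0 ≤ γ p :=
    hγ0 ▸ hγ.monotoneOn (mem_Iic.2 (Nat.zero_le L)) (mem_Iic.2 hp) (Nat.zero_le p)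
  intro x hx
  unfold vstrip at hx
  split_ifs at hx
  exacts [h0.trans_lt hx, h0.trans_lt hx.1]

theorem isPreconnected_vstrip (γ : ℕ → ℝ) (L p : ℕ) : IsPreconnected (vstrip γ L p) := by
  unfold vstrip
  split_ifs
  exacts [isPreconnected_Ioi, isPreconnected_Ioo]

/-- Generalized Mahé lemma.  Let `a n` (for `n : Fin N`) be a finite family of
nonzero generalized polynomial functions, given with their unique
representations `a n x y = ∑ i, aa n i x · y ^ β n i` (with `K n` strictly
increasing `y`-exponents and nonzero one-variable generalized polynomial
coefficients), closed under the operations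
(i) `a ↦ ∂a/∂y` if the least `y`-exponent is `0`, resp. `a ↦ y^{-β₁}·a` if not
(for `K > 1`), and (ii) `a ↦ r_a = a − (y/β_K)·∂a/∂y` if the least `y`-exponent
is `0` (for `K > 1`).  Suppose the conclusions of the projection lemma hold for
this family, with subdivision `0 = γ 0 < … < γ L`, root counts `s n p`, root
functions `ξ n p j` (with the convention `ξ n p 0 ≡ 0`), and the uniform
trichotomy.  Then for every `p ≤ L`, every `n`, and every `j ≤ s n p` there is a
sup of infs of finitely many generalized polynomial functions agreeing, on the
half-strip `H p`, with `a n` above the graph of `ξ n p j` and with `0` on or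
below it. -/
theorem generalized_mahe_lemma (N : ℕ) (a : Fin N → ℝ → ℝ → ℝ)
    (K : Fin N → ℕ) (hK : ∀ n, 0 < K n)
    (β : (n : Fin N) → Fin (K n) → ℝ) (hβ : ∀ n, StrictMono (β n))
    (aa : (n : Fin N) → Fin (K n) → ℝ → ℝ)
    (haa : ∀ n i, IsGenPoly1 (aa n i))
    (haanz : ∀ n i, ∃ x : ℝ, 0 < x ∧ aa n i x ≠ 0)
    (ha : ∀ n, ∀ x y : ℝ, 0 < x → 0 < y → a n x y = ∑ i, aa n i x * y ^ β n i)
    -- closure under operation (i):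
    (hclosed₁ : ∀ n, 1 < K n → β n ⟨0, hK n⟩ = 0 →
      ∃ n', ∀ x y : ℝ, 0 < x → 0 < y →
        a n' x y = ∑ i, aa n i x * (β n i * y ^ (β n i - 1)))
    (hclosed₂ : ∀ n, 1 < K n → β n ⟨0, hK n⟩ ≠ 0 →
      ∃ n', ∀ x y : ℝ, 0 < x → 0 < y →
        a n' x y = y ^ (-(β n ⟨0, hK n⟩)) * a n x y)
    -- closure under operation (ii):
    (hclosed₃ : ∀ n, 1 < K n → β n ⟨0, hK n⟩ = 0 →
      ∃ n', ∀ x y : ℝ, 0 < x → 0 < y →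
        a n' x y = a n x y - y / β n ⟨K n - 1, Nat.sub_lt (hK n) one_pos⟩ *
          (∑ i, aa n i x * (β n i * y ^ (β n i - 1))))
    -- conclusions of the projection lemma for this family:
    (L : ℕ) (γ : ℕ → ℝ) (hγ0 : γ 0 = 0) (hγmono : StrictMonoOn γ (Set.Iic L))
    (s : Fin N → ℕ → ℕ) (ξ : Fin N → ℕ → ℕ → ℝ → ℝ)
    (hξzero : ∀ n, ∀ p, ∀ x : ℝ, ξ n p 0 x = 0)
    (hcont : ∀ n, ∀ p ≤ L, ∀ j, 1 ≤ j → j ≤ s n p →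
      ContinuousOn (ξ n p j) (vstrip γ L p))
    (hpos : ∀ n, ∀ p ≤ L, ∀ j, 1 ≤ j → j ≤ s n p →
      ∀ x ∈ vstrip γ L p, 0 < ξ n p j x)
    (hord : ∀ n, ∀ p ≤ L, ∀ j j', 1 ≤ j → j < j' → j' ≤ s n p →
      ∀ x ∈ vstrip γ L p, ξ n p j x < ξ n p j' x)
    (hzero : ∀ n, ∀ p ≤ L, ∀ x ∈ vstrip γ L p, ∀ y : ℝ, 0 < y →
      (a n x y = 0 ↔ ∃ j, 1 ≤ j ∧ j ≤ s n p ∧ y = ξ n p j x))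
    (htri : ∀ n₁ n₂, ∀ p ≤ L, ∀ j₁ j₂, 1 ≤ j₁ → j₁ ≤ s n₁ p → 1 ≤ j₂ → j₂ ≤ s n₂ p →
      (∀ x ∈ vstrip γ L p, ξ n₁ p j₁ x < ξ n₂ p j₂ x) ∨
      (∀ x ∈ vstrip γ L p, ξ n₁ p j₁ x = ξ n₂ p j₂ x) ∨
      (∀ x ∈ vstrip γ L p, ξ n₂ p j₂ x < ξ n₁ p j₁ x)) :
    ∀ p ≤ L, ∀ n : Fin N, ∀ j ≤ s n p,
      ∃ c : ℝ → ℝ → ℝ, IsSupInf2 c ∧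
        ∀ x ∈ vstrip γ L p, ∀ y : ℝ, 0 < y →
          c x y = if ξ n p j x < y then a n x y else 0 := by
  intro p hp n j hj
  have hV := vstrip_subset_Ioi hγ0 hγmono hp
  have R : ∀ n, IsRootSystem (vstrip γ L p) (a n) (s n p) (ξ n p) := fun n =>
    .of_pos (hξzero n p) (hcont n p hp) (hpos n p hp) (hord n p hp) (hzero n p hp)
  have hgen : ∀ n, IsGenPoly2 (a n) := fun n => isGenPoly2_of_sum_mul_rpow (haa n) (ha n)
  have F : IsRootFamily (vstrip γ L p) a (s · p) (ξ · p) :=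
    ⟨isPreconnected_vstrip γ L p, fun n => (hgen n).continuousOn.mono (prod_mono hV subset_rfl),
      R, fun n m i k hi hk => (R n).isUniformlyOrdered (R m) (htri n m p hp) hi hk⟩
  exact F.hasSupInfTrunc hV hgen (maheDescent_of_closed hK hβ haanz ha hclosed₁ hclosed₂ hclosed₃)
    n hj
end
end

section
/- Let h : (0,∞) → ℝ be continuous and piecewise generalized polynomial in one variable; i.e., there exist distinct one-variable generalized polynomial functions g_1, …, g_l such that the sets A_i := {x ∈ (0,∞) : h(x) = g_i(x)} are generalized semialgebraic subsets of (0,∞) and cover (0,∞). Then there exist finitely many one-variable generalized polynomial functions f_{jk} (1 ≤ j ≤ J, 1 ≤ k ≤ K_j) such that h(x) = max_{1≤j≤J} min_{1≤k≤K_j} f_{jk}(x) for all x ∈ (0,∞). -/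
/-!
Substituting `x = exp τ` turns generalized polynomials into exponential polynomials
`∑ cₐ exp (a τ)` on `ℝ`. A nonzero exponential polynomial has finitely many zeros (Rolle, and
induction on the number of terms), so distinct pieces cross at finitely many points, and between
two consecutive crossings `h` follows a single piece. Hence for all `τ, σ` a finite family of
exponential polynomials contains some `f` with `h τ ≤ f τ` and `f σ ≤ h σ`: a piece, or a
separator `p - M cosh (b τ) (exp τ - exp z)` that stays above the piece `p` left of the first
crossing `z` in `[τ, σ]` and below the piece right of the last one. The Pierce–Birkhoff argument
then writes `h` as `max_τ min {f | h τ ≤ f τ}`.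
-/

open Set

noncomputable section

/-- The open half-line `(0,∞)`, as a subtype of `ℝ`. -/
abbrev P1 : Type := {x : ℝ // 0 < x}

/-- A one-variable generalized polynomial function: `x ↦ ∑ cᵢ x^{αᵢ}` with
nonzero real coefficients and distinct real exponents. -/
def IsGenPoly1S (a : P1 → ℝ) : Prop :=
  ∃ (m : ℕ) (c : Fin m → ℝ) (α : Fin m → ℝ),
    (∀ i, c i ≠ 0) ∧ Function.Injective α ∧
    ∀ x : P1, a x = ∑ i, c i * (x : ℝ) ^ α i

/-- A basic generalized semialgebraic subset of `(0,∞)`. -/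
def IsBasicGSA1 (S : Set P1) : Prop :=
  ∃ (f : P1 → ℝ) (K : ℕ) (g : Fin K → P1 → ℝ),
    IsGenPoly1S f ∧ (∀ k, IsGenPoly1S (g k)) ∧
    S = {x : P1 | f x = 0 ∧ ∀ k, 0 < g k x}

/-- A generalized semialgebraic subset of `(0,∞)`: a finite union of basic ones. -/
def IsGSA1 (S : Set P1) : Prop :=
  ∃ (J : ℕ) (T : Fin J → Set P1), (∀ j, IsBasicGSA1 (T j)) ∧ S = ⋃ j, T j

open Real Filter

lemma Set.Finite.exists_fin_succ_range_eq {α : Type*} {s : Set α} (hs : s.Finite)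
    (hne : s.Nonempty) : ∃ (n : ℕ) (f : Fin (n + 1) → α), range f = s := by
  obtain ⟨n, f, hf⟩ := hs.fin_embedding
  obtain ⟨a, ha⟩ := hne
  exact ⟨n, Fin.cons a f, by rw [Fin.range_cons, hf, insert_eq_of_mem ha]⟩

theorem exists_eq_iSup_iInf_of_separating {X : Type*} [Nonempty X] {h : X → ℝ}
    {S : Set (X → ℝ)} (hS : S.Finite)
    (hsep : ∀ x y, ∃ f ∈ S, h x ≤ f x ∧ f y ≤ h y) :
    ∃ (J : ℕ) (K : Fin (J + 1) → ℕ) (f : (j : Fin (J + 1)) → Fin (K j + 1) → X → ℝ),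
      (∀ j k, f j k ∈ S) ∧ ∀ x, h x = ⨆ j, ⨅ k, f j k x := by
  -- `min (A x) ≤ h` everywhere by `hsep x`, with equality at `x`.
  set A : X → Set (X → ℝ) := fun x => {f ∈ S | h x ≤ f x}
  have hA : (range A).Finite :=
    hS.finite_subsets.subset (range_subset_iff.2 fun x => sep_subset _ _)
  obtain ⟨J, e, he⟩ := hA.exists_fin_succ_range_eq (range_nonempty A)
  have hAe : ∀ j, e j ∈ range A := fun j => he ▸ mem_range_self j
  have hK : ∀ j, ∃ (K : ℕ) (g : Fin (K + 1) → X → ℝ), range g = e j := fun j => by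
    obtain ⟨x, hx⟩ := hAe j
    obtain ⟨f, hf, hfx, -⟩ := hsep x x
    exact (hS.subset (hx ▸ sep_subset _ _)).exists_fin_succ_range_eq ⟨f, hx ▸ ⟨hf, hfx⟩⟩
  choose K f hf using hK
  have hfe : ∀ j k, f j k ∈ e j := fun j k => hf j ▸ mem_range_self k
  refine ⟨J, K, f, fun j k => ?_, fun x => le_antisymm ?_ ?_⟩
  · obtain ⟨x, hx⟩ := hAe j
    exact (hx ▸ hfe j k).1
  · obtain ⟨j, hj⟩ : A x ∈ range e := he ▸ mem_range_self x
    exact le_ciSup_of_le (finite_range _).bddAbove j (le_ciInf fun k => (hj ▸ hfe j k).2)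
  · refine ciSup_le fun j => ?_
    obtain ⟨y, hy⟩ := hAe j
    obtain ⟨g, hg, hyg, hgx⟩ := hsep y x
    obtain ⟨k, rfl⟩ : g ∈ range (f j) := hf j ▸ hy ▸ ⟨hg, hyg⟩
    exact ciInf_le_of_le (finite_range _).bddBelow k hgx

theorem finite_setOf_eq_zero_of_hasDerivAt {f f' : ℝ → ℝ} (hf : ∀ x, HasDerivAt f (f' x) x)
    (hf' : {x | f' x = 0}.Finite) : {x | f x = 0}.Finite := by
  set Z' := {x | f' x = 0}
  -- By Rolle, distinct zeros of `f` have different sets of zeros of `f'` to their left, and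
  -- there are only finitely many such sets.
  have hleft : ∀ x y, x < y → f x = 0 → f y = 0 → Z' ∩ Iio x ≠ Z' ∩ Iio y := by
    intro x y hxy hx hy heq
    obtain ⟨c, hc, hc'⟩ := exists_hasDerivAt_eq_zero hxy
      (fun t _ => (hf t).continuousAt.continuousWithinAt) (hx.trans hy.symm) (fun t _ => hf t)
    have : c ∈ Z' ∩ Iio x := heq ▸ ⟨hc', hc.2⟩
    exact lt_asymm hc.1 this.2
  by_contra hinf
  obtain ⟨x, hx, y, hy, hne, heq⟩ := Set.Infinite.exists_ne_map_eq_of_mapsTo hinf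
    (f := fun x => Z' ∩ Iio x) (fun x _ => inter_subset_left) hf'.finite_subsets
  rcases hne.lt_or_gt with h | h
  · exact hleft x y h hx hy heq
  · exact hleft y x h hy hx heq.symm

lemma hasDerivAt_sum_mul_exp {ι : Type*} (s : Finset ι) (c e : ι → ℝ) (τ : ℝ) :
    HasDerivAt (fun τ => ∑ a ∈ s, c a * exp (e a * τ))
      (∑ a ∈ s, c a * e a * exp (e a * τ)) τ := by
  refine HasDerivAt.fun_sum fun a _ => ?_
  exact ((((hasDerivAt_id' τ).const_mul (e a)).exp).const_mul (c a)).congr_deriv (by ring)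

theorem finite_setOf_sum_mul_exp_eq_zero {ι : Type*} {s : Finset ι} (hs : s.Nonempty) :
    ∀ {c e : ι → ℝ}, InjOn e s → (∀ a ∈ s, c a ≠ 0) →
      {τ | ∑ a ∈ s, c a * exp (e a * τ) = 0}.Finite := by
  induction hs using Finset.Nonempty.cons_induction with
  | singleton a =>
    intro c e _ hc
    simp [hc a (Finset.mem_singleton_self a), exp_ne_zero]
  | cons a₀ s ha₀ _ ih =>
    intro c e he hc
    -- Dividing by `exp (e a₀ * τ)` kills the `a₀` term after one differentiation.
    set F₀ : ℝ → ℝ := fun τ => c a₀ + ∑ a ∈ s, c a * exp ((e a - e a₀) * τ)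
    have hfactor : ∀ τ,
        ∑ a ∈ Finset.cons a₀ s ha₀, c a * exp (e a * τ) = exp (e a₀ * τ) * F₀ τ := by
      intro τ
      simp only [F₀, Finset.sum_cons, mul_add, Finset.mul_sum]
      congr 1
      · ring
      · refine Finset.sum_congr rfl fun a _ => ?_
        rw [mul_left_comm, ← exp_add]; ring_nf
    have hder : ∀ τ,
        HasDerivAt F₀ (∑ a ∈ s, c a * (e a - e a₀) * exp ((e a - e a₀) * τ)) τ := fun τ =>
      (hasDerivAt_sum_mul_exp s c (fun a => e a - e a₀) τ).const_add (c a₀)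
    have hF₀ : {τ | F₀ τ = 0}.Finite := by
      refine finite_setOf_eq_zero_of_hasDerivAt hder (ih ?_ ?_)
      · exact fun a ha b hb hab =>
          he (Finset.mem_cons_of_mem ha) (Finset.mem_cons_of_mem hb) (sub_left_inj.1 hab)
      · intro a ha
        refine mul_ne_zero (hc a (Finset.mem_cons_of_mem ha)) (sub_ne_zero.2 fun h => ?_)
        exact ha₀ (he (Finset.mem_cons_of_mem ha) (Finset.mem_cons_self a₀ s) h ▸ ha)
    simpa only [hfactor, mul_eq_zero, exp_ne_zero, false_or] using hF₀

def crossings {X Y ι : Type*} (G : ι → X → Y) : Set X :=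
  {x | ∃ i j, G i ≠ G j ∧ G i x = G j x}

theorem IsPreconnected.exists_eqOn_of_disjoint_crossings {X Y ι : Type*} [TopologicalSpace X]
    [TopologicalSpace Y] [T2Space Y] [Finite ι] {s : Set X} (hs : IsPreconnected s)
    (hne : s.Nonempty) {H : X → Y} {G : ι → X → Y} (hH : Continuous H)
    (hG : ∀ i, Continuous (G i)) (hcov : ∀ x ∈ s, ∃ i, H x = G i x)
    (hcross : Disjoint s (crossings G)) : ∃ i, EqOn H (G i) s := by
  obtain ⟨x₀, hx₀⟩ := hne
  obtain ⟨i, hi⟩ := hcov x₀ hx₀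
  refine ⟨i, fun x hx => ?_⟩
  set others := ⋃ j ∈ {j | G j ≠ G i}, {x | H x = G j x}
  have hclosed : IsClosed others :=
    (toFinite _).isClosed_biUnion fun j _ => isClosed_eq hH (hG j)
  have hsub : s ⊆ {x | H x = G i x} ∪ others := fun x hx => by
    obtain ⟨j, hj⟩ := hcov x hx
    by_cases hji : G j = G i
    · exact Or.inl (hji ▸ hj)
    · exact Or.inr (mem_biUnion hji hj)
  have hsep : ¬(s ∩ others).Nonempty := fun hne' => by
    obtain ⟨y, hy, hyi, hyo⟩ := (isPreconnected_closed_iff.1 hs) _ _ (isClosed_eq hH (hG i))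
      hclosed hsub ⟨x₀, hx₀, hi⟩ hne'
    obtain ⟨j, hji, hyj⟩ := mem_iUnion₂.1 hyo
    exact hcross.ne_of_mem hy ⟨j, i, hji, hyj.symm.trans hyi⟩ rfl
  exact (hsub hx).resolve_right fun hxo => hsep ⟨x, hx, hxo⟩

def expPoly : Submodule ℝ (ℝ → ℝ) :=
  Submodule.span ℝ (range fun a τ => exp (a * τ))

lemma exp_mul_mem_expPoly (a : ℝ) : (fun τ => exp (a * τ)) ∈ expPoly :=
  Submodule.subset_span ⟨a, rfl⟩

lemma const_mem_expPoly (c : ℝ) : (fun _ => c) ∈ expPoly := by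
  convert expPoly.smul_mem c (exp_mul_mem_expPoly 0) using 1
  funext τ; simp

lemma mul_mem_expPoly {F G : ℝ → ℝ} (hF : F ∈ expPoly) (hG : G ∈ expPoly) :
    F * G ∈ expPoly := by
  have hmul : expPoly * expPoly ≤ expPoly := by
    rw [expPoly, Submodule.span_mul_span]
    refine Submodule.span_mono ?_
    rintro _ ⟨_, ⟨a, rfl⟩, _, ⟨b, rfl⟩, rfl⟩
    exact ⟨a + b, funext fun τ => by simp [add_mul, exp_add]⟩
  exact hmul (Submodule.mul_mem_mul hF hG)

lemma cosh_mul_mem_expPoly (b : ℝ) : (fun τ => cosh (b * τ)) ∈ expPoly := by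
  convert expPoly.smul_mem (1 / 2 : ℝ)
    (expPoly.add_mem (exp_mul_mem_expPoly b) (exp_mul_mem_expPoly (-b))) using 1
  funext τ
  simp [cosh_eq, neg_mul]
  ring

lemma exists_finsupp_of_mem_expPoly {F : ℝ → ℝ} (hF : F ∈ expPoly) :
    ∃ c : ℝ →₀ ℝ, ∀ τ, F τ = ∑ a ∈ c.support, c a * exp (a * τ) := by
  obtain ⟨c, rfl⟩ := Finsupp.mem_span_range_iff_exists_finsupp.1 hF
  exact ⟨c, fun τ => by simp [Finsupp.sum]⟩

lemma contDiff_of_mem_expPoly {F : ℝ → ℝ} (hF : F ∈ expPoly) : ContDiff ℝ 1 F := by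
  obtain ⟨c, hc⟩ := exists_finsupp_of_mem_expPoly hF
  rw [funext hc]
  fun_prop

lemma exists_abs_le_cosh_of_mem_expPoly {F : ℝ → ℝ} (hF : F ∈ expPoly) :
    ∃ b C : ℝ, ∀ τ, |F τ| ≤ C * cosh (b * τ) := by
  induction hF using Submodule.span_induction with
  | mem _ h =>
    obtain ⟨a, rfl⟩ := h
    refine ⟨a, 2, fun τ => ?_⟩
    rw [abs_of_pos (exp_pos _), cosh_eq]
    linarith [exp_pos (-(a * τ))]
  | zero => exact ⟨0, 0, fun τ => by simp⟩
  | add F G _ _ hF hG =>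
    obtain ⟨b₁, C₁, h₁⟩ := hF
    obtain ⟨b₂, C₂, h₂⟩ := hG
    set B := max |b₁| |b₂|
    have hB : ∀ b C, |b| ≤ B → ∀ τ, C * cosh (b * τ) ≤ |C| * cosh (B * τ) := by
      intro b C hb τ
      have hcosh : cosh (b * τ) ≤ cosh (B * τ) := by
        rw [cosh_le_cosh, abs_mul, abs_mul, abs_of_nonneg ((abs_nonneg b).trans hb)]
        exact mul_le_mul_of_nonneg_right hb (abs_nonneg τ)
      calc C * cosh (b * τ) ≤ |C| * cosh (b * τ) :=
            mul_le_mul_of_nonneg_right (le_abs_self C) (cosh_pos _).le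
        _ ≤ |C| * cosh (B * τ) := mul_le_mul_of_nonneg_left hcosh (abs_nonneg C)
    refine ⟨B, |C₁| + |C₂|, fun τ => ?_⟩
    calc |(F + G) τ| ≤ |F τ| + |G τ| := abs_add_le _ _
      _ ≤ |C₁| * cosh (B * τ) + |C₂| * cosh (B * τ) :=
        add_le_add ((h₁ τ).trans (hB _ _ (le_max_left _ _) τ))
          ((h₂ τ).trans (hB _ _ (le_max_right _ _) τ))
      _ = (|C₁| + |C₂|) * cosh (B * τ) := by ring
  | smul r F _ hF =>
    obtain ⟨b, C, h⟩ := hF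
    exact ⟨b, |r| * C, fun τ => by
      simpa [abs_mul, mul_assoc] using mul_le_mul_of_nonneg_left (h τ) (abs_nonneg r)⟩

theorem finite_setOf_eq_zero_of_mem_expPoly {F : ℝ → ℝ} (hF : F ∈ expPoly)
    (hF₀ : F ≠ 0) :
    {τ | F τ = 0}.Finite := by
  obtain ⟨c, hc⟩ := exists_finsupp_of_mem_expPoly hF
  have hne : c.support.Nonempty := by
    refine Finset.nonempty_iff_ne_empty.2 fun h => hF₀ (funext fun τ => ?_)
    simp [hc τ, h]
  simp only [hc]
  exact finite_setOf_sum_mul_exp_eq_zero hne (e := id) (injOn_id _)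
    fun a ha => Finsupp.mem_support_iff.1 ha

/-- `cosh (b τ)` dominates every exponential polynomial with exponents in `[-b, b]`, and the
second factor changes sign at `z`. -/
def barrier (b z τ : ℝ) : ℝ := cosh (b * τ) * (exp τ - exp z)

lemma barrier_mem_expPoly (b z : ℝ) : barrier b z ∈ expPoly :=
  mul_mem_expPoly (cosh_mul_mem_expPoly b)
    (expPoly.sub_mem (by simpa using exp_mul_mem_expPoly 1) (const_mem_expPoly (exp z)))

lemma barrier_nonpos {b z τ : ℝ} (h : τ ≤ z) : barrier b z τ ≤ 0 :=
  mul_nonpos_of_nonneg_of_nonpos (cosh_pos _).le (sub_nonpos.2 (exp_le_exp.2 h))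

lemma eventually_nonneg_add_smul_barrier_of_lt {G : ℝ → ℝ} {b C z ζ : ℝ}
    (hG : ∀ τ, |G τ| ≤ C * cosh (b * τ)) (hzζ : z < ζ) :
    ∀ᶠ M in atTop, ∀ τ, ζ ≤ τ → 0 ≤ G τ + M * barrier b z τ := by
  have hd : 0 < exp ζ - exp z := sub_pos.2 (exp_lt_exp.2 hzζ)
  filter_upwards [eventually_ge_atTop (C / (exp ζ - exp z)), eventually_ge_atTop 0]
    with M hMC hM0 τ hτ
  have hgap : C ≤ M * (exp τ - exp z) := calc
    C ≤ M * (exp ζ - exp z) := (div_le_iff₀ hd).1 hMC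
    _ ≤ M * (exp τ - exp z) := by gcongr
  have := mul_le_mul_of_nonneg_right hgap (cosh_pos (b * τ)).le
  unfold barrier
  linarith [neg_abs_le (G τ), hG τ]

lemma eventually_nonneg_add_smul_barrier_near {G : ℝ → ℝ} (hG : LocallyLipschitz G) {z : ℝ}
    (hz : 0 ≤ G z) (b : ℝ) :
    ∃ ε > 0, ∀ᶠ M in atTop, ∀ τ ∈ Icc z (z + ε), 0 ≤ G τ + M * barrier b z τ := by
  obtain ⟨L, t, ht, hL⟩ := hG z
  obtain ⟨ε, hε, hball⟩ := Metric.mem_nhds_iff.1 ht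
  refine ⟨ε / 2, half_pos hε, ?_⟩
  filter_upwards [eventually_ge_atTop (L / exp z), eventually_ge_atTop 0] with M hML hM0 τ hτ
  have hτt : τ ∈ t := hball <| by
    rw [Metric.mem_ball, Real.dist_eq, abs_of_nonneg (by linarith [hτ.1])]
    linarith [hτ.2]
  have hlip : G z - G τ ≤ L * (τ - z) := by
    have := hL.dist_le_mul z (mem_of_mem_nhds ht) τ hτt
    rw [Real.dist_eq, Real.dist_eq, abs_sub_comm z, abs_of_nonneg (sub_nonneg.2 hτ.1)] at this
    linarith [le_abs_self (G z - G τ)]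
  have hexp : exp z * (τ - z) ≤ exp τ - exp z := by
    have := mul_le_mul_of_nonneg_left (add_one_le_exp (τ - z)) (exp_pos z).le
    rw [← exp_add, add_sub_cancel] at this
    linarith
  have hL' : L * (τ - z) ≤ M * (exp τ - exp z) := calc
    L * (τ - z) ≤ M * exp z * (τ - z) := by
      gcongr
      · linarith [hτ.1]
      · exact (div_le_iff₀ (exp_pos z)).1 hML
    _ ≤ M * (exp τ - exp z) := by rw [mul_assoc]; gcongr
  have hbarrier : M * (exp τ - exp z) ≤ M * barrier b z τ := by
    have hpos : 0 ≤ exp τ - exp z := sub_nonneg.2 (exp_le_exp.2 hτ.1)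
    refine mul_le_mul_of_nonneg_left ?_ hM0
    exact le_mul_of_one_le_left hpos (one_le_cosh _)
  linarith

lemma exists_separator_of_eventually {p q : ℝ → ℝ} (hp : p ∈ expPoly) {b z ζ : ℝ}
    (h : ∀ᶠ M in atTop, ∀ τ, ζ ≤ τ → 0 ≤ (q - p) τ + M * barrier b z τ) :
    ∃ f ∈ expPoly, (∀ τ ≤ z, p τ ≤ f τ) ∧ ∀ τ, ζ ≤ τ → f τ ≤ q τ := by
  obtain ⟨M, hM, hM0⟩ := (h.and (eventually_ge_atTop 0)).exists
  refine ⟨p - M • barrier b z,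
    expPoly.sub_mem hp (expPoly.smul_mem M (barrier_mem_expPoly b z)), fun τ hτ => ?_,
    fun τ hτ => ?_⟩
  · have := mul_nonpos_of_nonneg_of_nonpos hM0 (barrier_nonpos (b := b) hτ)
    simp only [Pi.sub_apply, Pi.smul_apply, smul_eq_mul]
    linarith
  · have := hM τ hτ
    simp only [Pi.sub_apply, Pi.smul_apply, smul_eq_mul] at this ⊢
    linarith

theorem exists_separator {p q : ℝ → ℝ} (hp : p ∈ expPoly) (hq : q ∈ expPoly) {z ζ : ℝ}
    (h : z < ζ ∨ z = ζ ∧ p z ≤ q z) :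
    ∃ f ∈ expPoly, (∀ τ ≤ z, p τ ≤ f τ) ∧ ∀ τ, ζ ≤ τ → f τ ≤ q τ := by
  have hG := expPoly.sub_mem hq hp
  obtain ⟨b, C, hbd⟩ := exists_abs_le_cosh_of_mem_expPoly hG
  refine exists_separator_of_eventually hp (b := b) ?_
  rcases h with hlt | ⟨rfl, hle⟩
  · exact eventually_nonneg_add_smul_barrier_of_lt hbd hlt
  · obtain ⟨ε, hε, hnear⟩ := eventually_nonneg_add_smul_barrier_near
      (contDiff_of_mem_expPoly hG).locallyLipschitz (sub_nonneg.2 hle) b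
    have hfar := eventually_nonneg_add_smul_barrier_of_lt hbd (lt_add_of_pos_right z hε)
    filter_upwards [hnear, hfar] with M hM₁ hM₂ τ hτ
    rcases le_total τ (z + ε) with h | h
    exacts [hM₁ τ ⟨hτ, h⟩, hM₂ τ h]

section Pieces

variable {ι : Type*} [Finite ι] {H : ℝ → ℝ} {G : ι → ℝ → ℝ}

theorem finite_crossings (hG : ∀ i, G i ∈ expPoly) : (crossings G).Finite := by
  have hpair : ∀ i j, {τ | G i ≠ G j ∧ G i τ = G j τ}.Finite := fun i j => by
    by_cases hij : G i = G j
    · simp [hij]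
    · refine (finite_setOf_eq_zero_of_mem_expPoly (expPoly.sub_mem (hG i) (hG j))
        (sub_ne_zero.2 hij)).subset fun τ hτ => ?_
      simp [hτ.2]
  convert finite_iUnion fun i => finite_iUnion (hpair i)
  ext τ; simp [crossings]

theorem exists_eqOn_Icc_of_disjoint_crossings (hH : Continuous H) (hG : ∀ i, Continuous (G i))
    (hcov : ∀ τ, ∃ i, H τ = G i τ) {a b : ℝ} (hab : a ≤ b)
    (hcross : Disjoint (Ioo a b) (crossings G)) : ∃ i, EqOn H (G i) (Icc a b) := by
  rcases hab.eq_or_lt with rfl | hlt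
  · obtain ⟨i, hi⟩ := hcov a
    exact ⟨i, by simpa using hi⟩
  · obtain ⟨i, hi⟩ := isPreconnected_Ioo.exists_eqOn_of_disjoint_crossings
      (nonempty_Ioo.2 hlt) hH hG (fun τ _ => hcov τ) hcross
    exact ⟨i, closure_Ioo hlt.ne ▸ hi.closure hH (hG i)⟩

theorem exists_eqOn_Icc_or_crossings_between (hH : Continuous H)
    (hG : ∀ i, Continuous (G i)) (hcov : ∀ τ, ∃ i, H τ = G i τ)
    (hZ : (crossings G).Finite) {τ σ : ℝ} (hτσ : τ ≤ σ) :
    (∃ i, EqOn H (G i) (Icc τ σ)) ∨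
      ∃ i i', ∃ z ∈ crossings G, ∃ z' ∈ crossings G, τ ≤ z ∧ z ≤ z' ∧ z' ≤ σ ∧
        EqOn H (G i) (Icc τ z) ∧ EqOn H (G i') (Icc z' σ) := by
  set T := crossings G ∩ Icc τ σ
  rcases T.eq_empty_or_nonempty with hT | hT
  · refine Or.inl (exists_eqOn_Icc_of_disjoint_crossings hH hG hcov hτσ ?_)
    exact disjoint_left.2 fun x hx hxZ => hT.subset ⟨hxZ, Ioo_subset_Icc_self hx⟩
  obtain ⟨z, ⟨hzZ, hτz, hzσ⟩, hzmin⟩ := exists_min_image T id (hZ.inter_of_left _) hT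
  obtain ⟨z', ⟨hz'Z, hτz', hz'σ⟩, hz'max⟩ := exists_max_image T id (hZ.inter_of_left _) hT
  obtain ⟨i, hi⟩ := exists_eqOn_Icc_of_disjoint_crossings hH hG hcov hτz <| disjoint_left.2
    fun x hx hxZ => (hzmin x ⟨hxZ, hx.1.le, hx.2.le.trans hzσ⟩).not_gt hx.2
  obtain ⟨i', hi'⟩ := exists_eqOn_Icc_of_disjoint_crossings hH hG hcov hz'σ <| disjoint_left.2
    fun x hx hxZ => (hz'max x ⟨hxZ, hτz'.trans hx.1.le, hx.2.le⟩).not_gt hx.1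
  exact Or.inr
    ⟨i, i', z, hzZ, z', hz'Z, hτz, hzmin z' ⟨hz'Z, hτz', hz'σ⟩, hz'σ, hi, hi'⟩

theorem exists_finite_separating_of_le (hH : Continuous H) (hG : ∀ i, G i ∈ expPoly)
    (hcov : ∀ τ, ∃ i, H τ = G i τ) :
    ∃ S : Set (ℝ → ℝ), S.Finite ∧ S ⊆ expPoly ∧
      ∀ τ σ, τ ≤ σ → ∃ f ∈ S, H τ ≤ f τ ∧ f σ ≤ H σ := by
  have hZ := finite_crossings hG
  have : Finite (crossings G) := hZ.to_subtype
  have hsep : ∀ (i i' : ι) (z z' : ℝ), ∃ f ∈ expPoly,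
      (z < z' ∨ z = z' ∧ G i z ≤ G i' z) →
        (∀ τ ≤ z, G i τ ≤ f τ) ∧ ∀ τ, z' ≤ τ → f τ ≤ G i' τ := by
    intro i i' z z'
    by_cases h : z < z' ∨ z = z' ∧ G i z ≤ G i' z
    · obtain ⟨f, hf, hsep⟩ := exists_separator (hG i) (hG i') h
      exact ⟨f, hf, fun _ => hsep⟩
    · exact ⟨0, zero_mem _, fun h' => absurd h' h⟩
  choose sep hsepE hsep using hsep
  refine ⟨range G ∪ range fun a : ι × ι × crossings G × crossings G =>
      sep a.1 a.2.1 a.2.2.1 a.2.2.2, (finite_range _).union (finite_range _),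
    union_subset (range_subset_iff.2 hG) (range_subset_iff.2 fun _ => hsepE _ _ _ _),
    fun τ σ hτσ => ?_⟩
  have hGc i : Continuous (G i) := (contDiff_of_mem_expPoly (hG i)).continuous
  rcases exists_eqOn_Icc_or_crossings_between hH hGc hcov hZ hτσ with
    ⟨i, hi⟩ | ⟨i, i', z, hz, z', hz', hτz, hzz', hz'σ, hi, hi'⟩
  · exact ⟨G i, Or.inl ⟨i, rfl⟩, (hi ⟨le_rfl, hτσ⟩).le, (hi ⟨hτσ, le_rfl⟩).ge⟩
  have hcase : z < z' ∨ z = z' ∧ G i z ≤ G i' z := by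
    rcases hzz'.lt_or_eq with hlt | rfl
    · exact Or.inl hlt
    · exact Or.inr ⟨rfl, ((hi ⟨hτz, le_rfl⟩).symm.trans (hi' ⟨le_rfl, hz'σ⟩)).le⟩
  obtain ⟨hle, hge⟩ := hsep i i' z z' hcase
  refine ⟨sep i i' z z', Or.inr ⟨(i, i', ⟨z, hz⟩, ⟨z', hz'⟩), rfl⟩, ?_, ?_⟩
  · rw [hi ⟨le_rfl, hτz⟩]; exact hle τ hτz
  · rw [hi' ⟨hz'σ, le_rfl⟩]; exact hge σ hz'σ

theorem exists_finite_separating (hH : Continuous H) (hG : ∀ i, G i ∈ expPoly)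
    (hcov : ∀ τ, ∃ i, H τ = G i τ) :
    ∃ S : Set (ℝ → ℝ), S.Finite ∧ S ⊆ expPoly ∧
      ∀ τ σ, ∃ f ∈ S, H τ ≤ f τ ∧ f σ ≤ H σ := by
  obtain ⟨S₁, hS₁, hS₁E, hsep₁⟩ := exists_finite_separating_of_le hH hG hcov
  -- The case `σ < τ` is the case `τ ≤ σ` for `-H` and the pieces `-G i`, turned upside down.
  obtain ⟨S₂, hS₂, hS₂E, hsep₂⟩ :=
    exists_finite_separating_of_le (H := -H) (G := fun i => -G i) hH.neg
      (fun i => expPoly.neg_mem (hG i)) fun τ => (hcov τ).imp fun i hi => by simp [hi]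
  refine ⟨S₁ ∪ Neg.neg '' S₂, hS₁.union (hS₂.image _),
    union_subset hS₁E (image_subset_iff.2 fun f hf => expPoly.neg_mem (hS₂E hf)),
    fun τ σ => ?_⟩
  rcases le_total τ σ with h | h
  · obtain ⟨f, hf, h₁, h₂⟩ := hsep₁ τ σ h
    exact ⟨f, Or.inl hf, h₁, h₂⟩
  · obtain ⟨f, hf, h₁, h₂⟩ := hsep₂ σ τ h
    simp only [Pi.neg_apply] at h₁ h₂
    exact ⟨-f, Or.inr ⟨f, hf, rfl⟩, le_neg_of_le_neg h₂, neg_le.1 h₁⟩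

theorem exists_eq_iSup_iInf_of_pieces_mem_expPoly (hH : Continuous H)
    (hG : ∀ i, G i ∈ expPoly) (hcov : ∀ τ, ∃ i, H τ = G i τ) :
    ∃ (J : ℕ) (K : Fin (J + 1) → ℕ) (F : (j : Fin (J + 1)) → Fin (K j + 1) → ℝ → ℝ),
      (∀ j k, F j k ∈ expPoly) ∧ ∀ τ, H τ = ⨆ j, ⨅ k, F j k τ := by
  obtain ⟨S, hS, hSE, hsep⟩ := exists_finite_separating hH hG hcov
  obtain ⟨J, K, F, hFS, hHF⟩ := exists_eq_iSup_iInf_of_separating hS hsep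
  exact ⟨J, K, F, fun j k => hSE (hFS j k), hHF⟩

end Pieces

def expP1 (τ : ℝ) : P1 := ⟨exp τ, exp_pos τ⟩

lemma continuous_expP1 : Continuous expP1 := continuous_exp.subtype_mk _

lemma expP1_log (x : P1) : expP1 (log x) = x := Subtype.ext (exp_log x.2)

lemma IsGenPoly1S.comp_expP1_mem_expPoly {a : P1 → ℝ} (ha : IsGenPoly1S a) :
    a ∘ expP1 ∈ expPoly := by
  obtain ⟨m, c, α, -, -, hrep⟩ := ha
  have : a ∘ expP1 = ∑ i, c i • fun τ => exp (α i * τ) := by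
    funext τ
    simp [hrep, expP1, Finset.sum_apply, ← exp_mul, mul_comm]
  rw [this]
  exact Submodule.sum_mem _ fun i _ => expPoly.smul_mem _ (exp_mul_mem_expPoly _)

lemma isGenPoly1S_comp_log {F : ℝ → ℝ} (hF : F ∈ expPoly) :
    IsGenPoly1S fun x : P1 => F (log x) := by
  obtain ⟨c, hc⟩ := exists_finsupp_of_mem_expPoly hF
  set e := c.support.equivFin.symm
  refine ⟨c.support.card, fun k => c (e k), fun k => e k,
    fun k => Finsupp.mem_support_iff.1 (e k).2, Subtype.val_injective.comp e.injective,
    fun x => ?_⟩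
  simp only [hc, ← Finset.sum_coe_sort c.support, ← e.sum_comp]
  refine Finset.sum_congr rfl fun k _ => ?_
  rw [rpow_def_of_pos x.2, mul_comm (log _)]

theorem pierce_birkhoff_generalized_one_var_general (h : P1 → ℝ) (hc : Continuous h)
    (l : ℕ) (g : Fin l → P1 → ℝ)
    (hg : ∀ i, IsGenPoly1S (g i))
    (hcover : ∀ x : P1, ∃ i, h x = g i x) :
    ∃ (J : ℕ) (K : Fin (J + 1) → ℕ)
      (f : (j : Fin (J + 1)) → Fin (K j + 1) → P1 → ℝ),
      (∀ j k, IsGenPoly1S (f j k)) ∧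
      ∀ x : P1, h x = ⨆ j, ⨅ k, f j k x := by
  obtain ⟨J, K, F, hF, hhF⟩ := exists_eq_iSup_iInf_of_pieces_mem_expPoly
    (hc.comp continuous_expP1) (fun i => (hg i).comp_expP1_mem_expPoly)
    fun τ => hcover (expP1 τ)
  refine ⟨J, K, fun j k x => F j k (log x), fun j k => isGenPoly1S_comp_log (hF j k),
    fun x => ?_⟩
  simpa only [Function.comp_apply, expP1_log] using hhF (log x)

/-- The one-variable Pierce–Birkhoff theorem for generalized polynomials: a
continuous piecewise generalized polynomial function of one variable is a sup of
infs of finitely many one-variable generalized polynomial functions. -/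
theorem pierce_birkhoff_generalized_one_var (h : P1 → ℝ) (hc : Continuous h)
    (l : ℕ) (g : Fin l → P1 → ℝ)
    (hg : ∀ i, IsGenPoly1S (g i)) (hginj : Function.Injective g)
    (hGSA : ∀ i, IsGSA1 {x : P1 | h x = g i x})
    (hcover : ∀ x : P1, ∃ i, h x = g i x) :
    ∃ (J : ℕ) (K : Fin (J + 1) → ℕ)
      (f : (j : Fin (J + 1)) → Fin (K j + 1) → P1 → ℝ),
      (∀ j k, IsGenPoly1S (f j k)) ∧
      ∀ x : P1, h x = ⨆ j, ⨅ k, f j k x :=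
  pierce_birkhoff_generalized_one_var_general h hc l g hg hcover
end
end
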